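/- arXiv:0912.0688 — 3 statements merged into one kernel-verified Lean document; each statement's English description precedes it below -/
import Mathlib

section
/- Let P be a Poisson bivector on a smooth manifold M, B a 2-form on M, and C = P♯∘B♭. Then: (1) the concomitant of P and C satisfies C_{P,C}(α,β) = −ι_{P♯α∧P♯β}dB for all 1-forms α,β; (2) the Nijenhuis torsion of C satisfies N_C(X,Y) = P♯(ι_{CX∧Y}dB + ι_{X∧CY}dB − ι_{X∧Y}dB_C) for all vector fields X,Y; (3) d_C B_C = ℬ^{C,C} − dB_{C²}, where ℬ^{S,T}(X,Y,Z) = Σ_{cyclic(X,Y,Z)} dB(SX,TY,Z) for (1,1)-tensors S,T, and B_{C²}(X,Y) = B(C²X,Y). -/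
open scoped Manifold

noncomputable section

/-! ### Smooth functions, vector fields and tensor calculus on a manifold

We work with the algebraic (Lie–Rinehart) presentation of the Cartan calculus of a
smooth manifold `M`:  smooth real functions form a commutative ring, vector fields are
the derivations of that ring, differential forms are alternating multilinear maps on
vector fields with values in functions, and all classical operations (`d`, interior
products, Lie derivatives, Nijenhuis torsion, concomitants, ...) are given by their
global Koszul-type formulas. -/

variable {EM : Type*} [NormedAddCommGroup EM] [NormedSpace ℝ EM]
  {HM : Type*} [TopologicalSpace HM] (IM : ModelWithCorners ℝ EM HM)
  (M : Type*) [TopologicalSpace M] [ChartedSpace HM M]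

/-- The commutative ring of smooth real valued functions on `M`. -/
abbrev SmoothR := C^(⊤ : ℕ∞)⟮IM, M; ℝ⟯

/-- Vector fields on `M`, presented as derivations of the ring of smooth functions. -/
abbrev VF := Derivation ℝ (SmoothR IM M) (SmoothR IM M)

/-- Covariant 1-tensors (raw). -/
abbrev Cov1 := VF IM M → SmoothR IM M

/-- Covariant 2-tensors (raw). -/
abbrev Cov2 := VF IM M → VF IM M → SmoothR IM M

/-- Covariant 3-tensors (raw). -/
abbrev Cov3 := VF IM M → VF IM M → VF IM M → SmoothR IM M

/-- Covariant 4-tensors (raw). -/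
abbrev Cov4 := VF IM M → VF IM M → VF IM M → VF IM M → SmoothR IM M

variable {IM M}

/-- A covariant 1-tensor is a (smooth) 1-form when it is `C^∞(M)`-linear. -/
def IsOneForm (α : Cov1 IM M) : Prop :=
  (∀ X Y, α (X + Y) = α X + α Y) ∧ ∀ (f : SmoothR IM M) X, α (f • X) = f * α X

/-- A covariant 2-tensor is a (smooth) 2-form when it is `C^∞(M)`-bilinear and
alternating. -/
def IsTwoForm (B : Cov2 IM M) : Prop :=
  (∀ X, IsOneForm (B X)) ∧ (∀ Y, IsOneForm fun X => B X Y) ∧ ∀ X, B X X = 0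

/-- A covariant 3-tensor is a (smooth) 3-form when it is `C^∞(M)`-trilinear and
alternating. -/
def IsThreeForm (φ : Cov3 IM M) : Prop :=
  (∀ X Y, IsOneForm (φ X Y)) ∧ (∀ X Z, IsOneForm fun Y => φ X Y Z) ∧
    (∀ Y Z, IsOneForm fun X => φ X Y Z) ∧
    (∀ X Y, φ X X Y = 0) ∧ (∀ X Y, φ X Y Y = 0) ∧ ∀ X Y, φ X Y X = 0

/-- A `(1,1)`-tensor is a `C^∞(M)`-linear endomorphism of vector fields. -/
def IsTensor11 (A : VF IM M → VF IM M) : Prop :=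
  (∀ X Y, A (X + Y) = A X + A Y) ∧ ∀ (f : SmoothR IM M) X, A (f • X) = f • A X

/-- The differential of a function, as a covariant 1-tensor. -/
def dF (f : SmoothR IM M) : Cov1 IM M := fun X => X f

/-- Exterior differential of a 1-tensor (Koszul formula). -/
def d1 (α : Cov1 IM M) : Cov2 IM M := fun X Y => X (α Y) - Y (α X) - α ⁅X, Y⁆

/-- Exterior differential of a 2-tensor (Koszul formula). -/
def d2 (B : Cov2 IM M) : Cov3 IM M := fun X Y Z =>
  X (B Y Z) - Y (B X Z) + Z (B X Y) - B ⁅X, Y⁆ Z + B ⁅X, Z⁆ Y - B ⁅Y, Z⁆ X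

/-- Exterior differential of a 3-tensor (Koszul formula). -/
def d3 (φ : Cov3 IM M) : Cov4 IM M := fun X Y Z W =>
  X (φ Y Z W) - Y (φ X Z W) + Z (φ X Y W) - W (φ X Y Z)
    - φ ⁅X, Y⁆ Z W + φ ⁅X, Z⁆ Y W - φ ⁅X, W⁆ Y Z
    - φ ⁅Y, Z⁆ X W + φ ⁅Y, W⁆ X Z - φ ⁅Z, W⁆ X Y

/-- Lie derivative of a 1-tensor along a vector field. -/
def lieDer (X : VF IM M) (α : Cov1 IM M) : Cov1 IM M := fun Y => X (α Y) - α ⁅X, Y⁆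

/-- The transpose `Aᵗ` of a `(1,1)`-tensor acting on covariant 1-tensors. -/
def transp (A : VF IM M → VF IM M) (α : Cov1 IM M) : Cov1 IM M := fun X => α (A X)

/-- The degree-zero derivation `ι_A` on 2-tensors. -/
def iota2 (A : VF IM M → VF IM M) (B : Cov2 IM M) : Cov2 IM M := fun X Y =>
  B (A X) Y + B X (A Y)

/-- The degree-zero derivation `ι_A` on 3-tensors. -/
def iota3 (A : VF IM M → VF IM M) (φ : Cov3 IM M) : Cov3 IM M := fun X Y Z =>
  φ (A X) Y Z + φ X (A Y) Z + φ X Y (A Z)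

/-- The degree-zero derivation `ι_A` on 4-tensors. -/
def iota4 (A : VF IM M → VF IM M) (ω : Cov4 IM M) : Cov4 IM M := fun X Y Z W =>
  ω (A X) Y Z W + ω X (A Y) Z W + ω X Y (A Z) W + ω X Y Z (A W)

/-- The derivation `d_A = ι_A ∘ d - d ∘ ι_A` on 2-tensors. -/
def dA2 (A : VF IM M → VF IM M) (B : Cov2 IM M) : Cov3 IM M :=
  iota3 A (d2 B) - d2 (iota2 A B)

/-- The derivation `d_A = ι_A ∘ d - d ∘ ι_A` on 3-tensors. -/
def dA3 (A : VF IM M → VF IM M) (φ : Cov3 IM M) : Cov4 IM M :=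
  iota4 A (d3 φ) - d3 (iota3 A φ)

/-- The Nijenhuis torsion of a `(1,1)`-tensor. -/
def torsion (A : VF IM M → VF IM M) (X Y : VF IM M) : VF IM M :=
  ⁅A X, A Y⁆ - A (⁅A X, Y⁆ + ⁅X, A Y⁆ - A ⁅X, Y⁆)

/-- A bivector field, encoded through its sharp map `P♯ : Ω¹(M) → 𝔛(M)`:
it is `C^∞(M)`-linear and skew-symmetric. -/
def IsBivector (P : Cov1 IM M → VF IM M) : Prop :=
  (∀ α β, P (α + β) = P α + P β) ∧ (∀ (f : SmoothR IM M) α, P (f • α) = f • P α) ∧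
    ∀ α β : Cov1 IM M, IsOneForm α → IsOneForm β → α (P β) = - β (P α)

/-- The function `P(α,β)` attached to a bivector `P` (through `P♯`) and two
covariant 1-tensors. -/
def bivFun (P : Cov1 IM M → VF IM M) (α β : Cov1 IM M) : SmoothR IM M := β (P α)

/-- The Poisson bracket of functions associated with a bivector. -/
def pbracket (P : Cov1 IM M → VF IM M) (f g : SmoothR IM M) : SmoothR IM M :=
  P (dF f) g

/-- A Poisson bivector: a bivector whose bracket of functions satisfies the Jacobi
identity (equivalently, `[P,P] = 0`). -/
def IsPoisson (P : Cov1 IM M → VF IM M) : Prop :=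
  IsBivector P ∧ ∀ f g h : SmoothR IM M,
    pbracket P f (pbracket P g h) + pbracket P g (pbracket P h f)
      + pbracket P h (pbracket P f g) = 0

/-- The concomitant `C_{P,A}` of a bivector `P` and a `(1,1)`-tensor `A`,
evaluated on two covariant 1-tensors; formula (1.8) of the paper. -/
def concom (P : Cov1 IM M → VF IM M) (A : VF IM M → VF IM M) (α β : Cov1 IM M) :
    Cov1 IM M :=
  lieDer (P β) (transp A α) - lieDer (P α) (transp A β)
    + transp A (lieDer (P α) β) - transp A (lieDer (P β) α)
    + dF (bivFun P (transp A α) β) - transp A (dF (bivFun P α β))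

/-- The 3-form `ℋ^{S,T}(X,Y,Z) = Σ_{cyclic} H(SX,TY,Z)` built from a 3-tensor and two
`(1,1)`-tensors. -/
def cyc (H : Cov3 IM M) (S T : VF IM M → VF IM M) : Cov3 IM M := fun X Y Z =>
  H (S X) (T Y) Z + H (S Y) (T Z) X + H (S Z) (T X) Y

/-- The 1-tensor `ι_{X∧Y}ω` (convention `ι_{X∧Y}ω = ι_Y ι_X ω`). -/
def ins2 (X Y : VF IM M) (ω : Cov3 IM M) : Cov1 IM M := fun Z => ω X Y Z

/-- `B_C(X,Y) = B(CX,Y)`. -/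
def lcomp (B : Cov2 IM M) (C : VF IM M → VF IM M) : Cov2 IM M := fun X Y => B (C X) Y

/-- A Poisson quasi-Nijenhuis structure with background `(P,A,φ,H)` on `M`
(Definition 1.1 of the paper): `P` is a Poisson bivector, `A` a `(1,1)`-tensor, `φ` and
`H` closed 3-forms, satisfying the four compatibility conditions (2.1)–(2.4). -/
def IsPqNb (P : Cov1 IM M → VF IM M) (A : VF IM M → VF IM M) (φ H : Cov3 IM M) : Prop :=
  IsPoisson P ∧ IsTensor11 A ∧
    IsThreeForm φ ∧ d3 φ = 0 ∧ IsThreeForm H ∧ d3 H = 0 ∧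
    (∀ α : Cov1 IM M, IsOneForm α → A (P α) = P (transp A α)) ∧
    (∀ α β : Cov1 IM M, IsOneForm α → IsOneForm β →
      concom P A α β = fun Z => - H (P α) (P β) Z) ∧
    (∀ X Y, torsion A X Y =
      P (fun Z => φ X Y Z + H (A X) Y Z + H X (A Y) Z)) ∧
    dA3 A φ = d3 (cyc H A A)



/-! ### Auxiliary lemmas -/

section AuxiliaryLemmas

variable {P : Cov1 IM M → VF IM M} {B : Cov2 IM M}

lemma aux_half {x : SmoothR IM M} (h : x = -x) : x = 0 := by
  have h2 : (2:ℝ) • x = 0 := by rw [two_smul]; nth_rewrite 1 [h]; exact neg_add_cancel x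
  have h3 : x = (2⁻¹:ℝ) • ((2:ℝ) • x) := by rw [smul_smul]; norm_num
  rw [h3, h2, smul_zero]

lemma aux_neg_smul (X : VF IM M) : (-1 : SmoothR IM M) • X = -X := by
  ext g
  rw [Derivation.smul_apply, Derivation.neg_apply, smul_eq_mul, neg_one_mul]

lemma aux_bracket_add (X Y Z : VF IM M) : ⁅X, Y + Z⁆ = ⁅X, Y⁆ + ⁅X, Z⁆ := by
  ext g
  simp only [Derivation.commutator_apply, Derivation.add_apply, Derivation.map_add]
  ring

lemma aux_of_neg {α : Cov1 IM M} (hα : IsOneForm α) (X : VF IM M) : α (-X) = - α X := by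
  have h := hα.2 (-1) X
  rw [aux_neg_smul] at h
  rw [h]; ring

lemma aux_of_sub {α : Cov1 IM M} (hα : IsOneForm α) (X Y : VF IM M) :
    α (X - Y) = α X - α Y := by
  rw [sub_eq_add_neg, hα.1, aux_of_neg hα, sub_eq_add_neg]

lemma aux_Bskew (hB : IsTwoForm B) (X Y : VF IM M) : B X Y = - B Y X := by
  have h0 := hB.2.2 (X + Y)
  have h1 := (hB.2.1 (X + Y)).1 X Y
  have h2 := (hB.1 X).1 X Y
  have h3 := (hB.1 Y).1 X Y
  have h4 := hB.2.2 X
  have h5 := hB.2.2 Y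
  linear_combination h0 - h1 - h2 - h3 - h4 - h5

lemma aux_B1_add {B2 : Cov2 IM M} (hB2 : IsTwoForm B2) (V X Y : VF IM M) :
    B2 (X + Y) V = B2 X V + B2 Y V := (hB2.2.1 V).1 X Y

lemma aux_B1_smul {B2 : Cov2 IM M} (hB2 : IsTwoForm B2) (V : VF IM M) (f : SmoothR IM M)
    (X : VF IM M) : B2 (f • X) V = f * B2 X V := (hB2.2.1 V).2 f X

lemma aux_B2_add {B2 : Cov2 IM M} (hB2 : IsTwoForm B2) (U X Y : VF IM M) :
    B2 U (X + Y) = B2 U X + B2 U Y := (hB2.1 U).1 X Y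

lemma aux_B2_smul {B2 : Cov2 IM M} (hB2 : IsTwoForm B2) (U : VF IM M) (f : SmoothR IM M)
    (X : VF IM M) : B2 U (f • X) = f * B2 U X := (hB2.1 U).2 f X

lemma aux_dF_oneForm (f : SmoothR IM M) : IsOneForm (dF (IM := IM) (M := M) f) := by
  refine ⟨fun X Y => Derivation.add_apply f, fun g X => ?_⟩
  show (g • X) f = g * X f
  rw [Derivation.smul_apply, smul_eq_mul]

lemma aux_bracket_smul (X Y : VF IM M) (f : SmoothR IM M) :
    ⁅X, f • Y⁆ = f • ⁅X, Y⁆ + (X f) • Y := by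
  ext g
  simp only [Derivation.commutator_apply, Derivation.add_apply, Derivation.smul_apply,
    Derivation.leibniz, smul_eq_mul]
  ring

lemma aux_bracket_skew (X Y : VF IM M) : ⁅X, Y⁆ = -⁅Y, X⁆ := by
  ext g
  simp only [Derivation.commutator_apply, Derivation.neg_apply]
  ring

lemma aux_lieDer_oneForm {α : Cov1 IM M} (hα : IsOneForm α) (X : VF IM M) :
    IsOneForm (lieDer X α) := by
  constructor
  · intro Y Z
    simp only [lieDer, aux_bracket_add, hα.1, Derivation.map_add]
    ring
  · intro f Y
    simp only [lieDer, aux_bracket_smul, hα.1, hα.2, Derivation.leibniz, smul_eq_mul]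
    ring

lemma aux_Pflip (hP : IsPoisson P) (hB : IsTwoForm B) (w : VF IM M) :
    P (fun V => B V w) = - P (B w) := by
  have h : (fun V => B V w) = (-1 : SmoothR IM M) • (B w) := by
    funext V
    show B V w = (-1 : SmoothR IM M) • (B w V)
    rw [smul_eq_mul, neg_one_mul, ← aux_Bskew hB V w]
  rw [h, hP.1.2.1, aux_neg_smul]

lemma aux_hs (hP : IsPoisson P) (hB : IsTwoForm B) (U V : VF IM M) :
    B (P (B U)) V = B U (P (B V)) := by
  have h1 := hP.1.2.2 (fun W => B W V) (B U) (hB.2.1 V) (hB.1 U)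
  rw [aux_Pflip hP hB V, aux_of_neg (hB.1 U)] at h1
  simpa using h1

lemma aux_cadd (hP : IsPoisson P) (hB : IsTwoForm B) (X Y : VF IM M) :
    P (B (X + Y)) = P (B X) + P (B Y) := by
  have h : B (X + Y) = B X + B Y := by
    funext V
    show B (X + Y) V = B X V + B Y V
    exact (hB.2.1 V).1 X Y
  rw [h, hP.1.1]

lemma aux_csmul (hP : IsPoisson P) (hB : IsTwoForm B) (f : SmoothR IM M) (X : VF IM M) :
    P (B (f • X)) = f • P (B X) := by
  have h : B (f • X) = f • B X := by
    funext V
    show B (f • X) V = f • (B X V)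
    rw [smul_eq_mul]
    exact (hB.2.1 V).2 f X
  rw [h, hP.1.2.1]

lemma aux_lcomp_twoForm (hP : IsPoisson P) (hB : IsTwoForm B) :
    IsTwoForm (lcomp B fun X => P (B X)) := by
  refine ⟨fun X => hB.1 _, fun Y => ⟨fun X X' => ?_, fun f X => ?_⟩, fun X => ?_⟩
  · show B (P (B (X + X'))) Y = B (P (B X)) Y + B (P (B X')) Y
    rw [aux_cadd hP hB]
    exact (hB.2.1 Y).1 _ _
  · show B (P (B (f • X))) Y = f * B (P (B X)) Y
    rw [aux_csmul hP hB]
    exact (hB.2.1 Y).2 f _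
  · show B (P (B X)) X = 0
    refine aux_half ?_
    have h1 := aux_hs hP hB X X
    have h2 := aux_Bskew hB X (P (B X))
    linear_combination h1 + h2

lemma aux_d2_oneForm {B2 : Cov2 IM M} (hB2 : IsTwoForm B2) (U V : VF IM M) :
    IsOneForm (d2 B2 U V) := by
  constructor
  · intro Z Z'
    simp only [d2, aux_bracket_add, Derivation.add_apply, aux_B1_add hB2, aux_B2_add hB2,
      Derivation.map_add]
    ring
  · intro f Z
    simp only [d2, aux_bracket_smul, aux_B1_add hB2, aux_B1_smul hB2, aux_B2_smul hB2,
      Derivation.leibniz, Derivation.smul_apply, smul_eq_mul]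
    linear_combination (U f) * aux_Bskew hB2 V Z - (V f) * aux_Bskew hB2 U Z

lemma aux_ham (hP : IsPoisson P) (g f : SmoothR IM M) :
    ⁅P (dF g), P (dF f)⁆ = P (dF (P (dF g) f)) := by
  have flip : ∀ a b : SmoothR IM M, P (dF a) b = - P (dF b) a := fun a b =>
    hP.1.2.2 (dF b) (dF a) (aux_dF_oneForm b) (aux_dF_oneForm a)
  apply Derivation.ext; intro h
  have hj := hP.2 g f h
  simp only [pbracket] at hj
  rw [show P (dF h) g = - P (dF g) h from flip h g, Derivation.map_neg] at hj
  rw [Derivation.commutator_apply, show P (dF (P (dF g) f)) h = - P (dF h) (P (dF g) f)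
    from flip _ _]
  linear_combination hj

lemma aux_dagger (hP : IsPoisson P) {β : Cov1 IM M} (hβ : IsOneForm β)
    (g : SmoothR IM M) : ⁅P (dF g), P β⁆ = P (lieDer (P (dF g)) β) := by
  have hv : ∀ a : SmoothR IM M, P β a = - β (P (dF a)) := fun a =>
    hP.1.2.2 (dF a) β (aux_dF_oneForm a) hβ
  apply Derivation.ext; intro f
  have hr : P (lieDer (P (dF g)) β) f = - lieDer (P (dF g)) β (P (dF f)) :=
    hP.1.2.2 (dF f) (lieDer (P (dF g)) β) (aux_dF_oneForm f) (aux_lieDer_oneForm hβ _)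
  rw [Derivation.commutator_apply, hr, hv f, hv (P (dF g) f), Derivation.map_neg]
  simp only [lieDer]
  rw [← aux_ham hP g f]
  ring

lemma aux_keyVF (hP : IsPoisson P) {α β : Cov1 IM M} (hα : IsOneForm α)
    (hβ : IsOneForm β) :
    P (lieDer (P α) β) - P (lieDer (P β) α) - P (dF (bivFun P α β)) = ⁅P α, P β⁆ := by
  apply Derivation.ext; intro g
  have ev : ∀ γ : Cov1 IM M, IsOneForm γ → P γ g = - γ (P (dF g)) := fun γ hγ =>
    hP.1.2.2 (dF g) γ (aux_dF_oneForm g) hγ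
  rw [Derivation.sub_apply, Derivation.sub_apply, Derivation.commutator_apply,
    ev _ (aux_lieDer_oneForm hβ _), ev _ (aux_lieDer_oneForm hα _), ev _ (aux_dF_oneForm _),
    ev β hβ, ev α hα, Derivation.map_neg, Derivation.map_neg]
  simp only [lieDer, bivFun, dF]
  rw [show ⁅P α, P (dF g)⁆ = -⁅P (dF g), P α⁆ from aux_bracket_skew _ _,
    show ⁅P β, P (dF g)⁆ = -⁅P (dF g), P β⁆ from aux_bracket_skew _ _,
    aux_of_neg hβ, aux_of_neg hα, aux_dagger hP hα g, aux_dagger hP hβ g,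
    show β (P (lieDer (P (dF g)) α)) = - lieDer (P (dF g)) α (P β) from
      hP.1.2.2 β (lieDer (P (dF g)) α) hβ (aux_lieDer_oneForm hα _),
    show α (P (lieDer (P (dF g)) β)) = - lieDer (P (dF g)) β (P α) from
      hP.1.2.2 α (lieDer (P (dF g)) β) hα (aux_lieDer_oneForm hβ _)]
  simp only [lieDer]
  have hc := congrArg (P (dF g)) (hP.1.2.2 α β hα hβ)
  rw [Derivation.map_neg] at hc
  rw [show β ⁅P (dF g), P α⁆ = - lieDer (P (dF g)) α (P β) from by
    rw [aux_dagger hP hα g]; exact hP.1.2.2 β _ hβ (aux_lieDer_oneForm hα _)]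
  simp only [lieDer]
  ring

lemma aux_B1_neg {B2 : Cov2 IM M} (hB2 : IsTwoForm B2) (V X : VF IM M) :
    B2 (-X) V = - B2 X V := aux_of_neg (hB2.2.1 V) X

lemma aux_B1_sub {B2 : Cov2 IM M} (hB2 : IsTwoForm B2) (V X Y : VF IM M) :
    B2 (X - Y) V = B2 X V - B2 Y V := aux_of_sub (hB2.2.1 V) X Y

lemma aux_B2_neg {B2 : Cov2 IM M} (hB2 : IsTwoForm B2) (U X : VF IM M) :
    B2 U (-X) = - B2 U X := aux_of_neg (hB2.1 U) X

lemma aux_B2_sub {B2 : Cov2 IM M} (hB2 : IsTwoForm B2) (U X Y : VF IM M) :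
    B2 U (X - Y) = B2 U X - B2 U Y := aux_of_sub (hB2.1 U) X Y

lemma aux_BP (hP : IsPoisson P) (hB : IsTwoForm B) {γ : Cov1 IM M} (hγ : IsOneForm γ)
    (V : VF IM M) : B (P γ) V = γ (P (B V)) := by
  have h := hP.1.2.2 (fun W => B W V) γ (hB.2.1 V) hγ
  rw [aux_Pflip hP hB V, aux_of_neg hγ] at h
  simpa using h

lemma aux_oneForm_comb {a b c : Cov1 IM M} (ha : IsOneForm a) (hb : IsOneForm b)
    (hc : IsOneForm c) : IsOneForm (fun Z => a Z + b Z - c Z) := by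
  constructor
  · intro U V
    simp only [ha.1, hb.1, hc.1]
    ring
  · intro f U
    simp only [ha.2, hb.2, hc.2]
    ring

lemma aux_cneg (hP : IsPoisson P) (hB : IsTwoForm B) (V : VF IM M) :
    P (B (-V)) = - P (B V) := by
  have h : B (-V) = (-1 : SmoothR IM M) • (B V) := by
    funext W
    show B (-V) W = (-1 : SmoothR IM M) • (B V W)
    rw [smul_eq_mul, neg_one_mul, aux_B1_neg hB]
  rw [h, hP.1.2.1, aux_neg_smul]

end AuxiliaryLemmas

/-- **Lemma 3.2.**  For a Poisson bivector `P` and a 2-form `B` on `M`, with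
`C = P♯ ∘ B♭`: (1) the concomitant of `P` and `C` is
`C_{P,C}(α,β) = -ι_{P♯α ∧ P♯β} dB`; (2) the Nijenhuis torsion of `C` is
`N_C(X,Y) = P♯(ι_{CX∧Y} dB + ι_{X∧CY} dB - ι_{X∧Y} dB_C)`; and (3)
`d_C B_C = ℬ^{C,C} - dB_{C²}`. -/
theorem concomitant_torsion_of_sharp_comp
    (P : Cov1 IM M → VF IM M) (hP : IsPoisson P) (B : Cov2 IM M) (hB : IsTwoForm B) :
    (∀ α β : Cov1 IM M, IsOneForm α → IsOneForm β →
        concom P (fun X => P (B X)) α β = fun Z => - d2 B (P α) (P β) Z) ∧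
    (∀ X Y, torsion (fun X => P (B X)) X Y =
        P (fun Z => d2 B (P (B X)) Y Z + d2 B X (P (B Y)) Z
          - d2 (lcomp B fun X => P (B X)) X Y Z)) ∧
    dA2 (fun X => P (B X)) (lcomp B fun X => P (B X)) =
      cyc (d2 B) (fun X => P (B X)) (fun X => P (B X))
        - d2 (lcomp B fun X => P (B (P (B X)))) := by
  have skew : ∀ γ δ : Cov1 IM M, IsOneForm γ → IsOneForm δ → γ (P δ) = - δ (P γ) := hP.1.2.2
  have htr : ∀ γ : Cov1 IM M, IsOneForm γ → transp (fun X => P (B X)) γ = B (P γ) := by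
    intro γ hγ
    funext V
    show γ (P (B V)) = B (P γ) V
    rw [skew γ (B V) hγ (hB.1 V), aux_Bskew hB (P γ) V]
  have part1 : ∀ α β : Cov1 IM M, IsOneForm α → IsOneForm β →
      concom P (fun X => P (B X)) α β = fun Z => - d2 B (P α) (P β) Z := by
    intro α β hα hβ
    funext Z
    simp only [concom, Pi.add_apply, Pi.sub_apply]
    rw [htr α hα, htr β hβ, htr _ (aux_lieDer_oneForm hβ (P α)),
      htr _ (aux_lieDer_oneForm hα (P β)), htr _ (aux_dF_oneForm (bivFun P α β))]
    have hk : B (P (lieDer (P α) β)) Z - B (P (lieDer (P β) α)) Z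
        - B (P (dF (bivFun P α β))) Z = B ⁅P α, P β⁆ Z := by
      rw [← aux_keyVF hP hα hβ, aux_B1_sub hB, aux_B1_sub hB]
    have hT5 : bivFun P (B (P α)) β = - B (P α) (P β) :=
      skew β (B (P α)) hβ (hB.1 (P α))
    have hbs1 := aux_Bskew hB (P α) ⁅P β, Z⁆
    have hbs2 := aux_Bskew hB (P β) ⁅P α, Z⁆
    simp only [lieDer, dF, d2]
    rw [hT5, Derivation.map_neg]
    linear_combination hk - hbs1 + hbs2
  refine ⟨part1, ?_, ?_⟩
  · -- part 2
    intro X Y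
    apply Derivation.ext; intro g
    have hγ : IsOneForm (fun Z => d2 B (P (B X)) Y Z + d2 B X (P (B Y)) Z
        - d2 (lcomp B fun X => P (B X)) X Y Z) :=
      aux_oneForm_comb (aux_d2_oneForm hB (P (B X)) Y) (aux_d2_oneForm hB X (P (B Y)))
        (aux_d2_oneForm (aux_lcomp_twoForm hP hB) X Y)
    have hrhs : P (fun Z => d2 B (P (B X)) Y Z + d2 B X (P (B Y)) Z
        - d2 (lcomp B fun X => P (B X)) X Y Z) g
        = - (d2 B (P (B X)) Y (P (dF g)) + d2 B X (P (B Y)) (P (dF g))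
          - d2 (lcomp B fun X => P (B X)) X Y (P (dF g))) :=
      hP.1.2.2 (dF g) _ (aux_dF_oneForm g) hγ
    have cg : ∀ V : VF IM M, P (B V) g = B (P (dF g)) V := by
      intro V
      rw [aux_Bskew hB (P (dF g)) V]
      exact hP.1.2.2 (dF g) (B V) (aux_dF_oneForm g) (hB.1 V)
    have bl : ∀ U V : VF IM M, B ⁅P (B U), P (dF g)⁆ V
        = - (P (dF g)) (B U (P (B V))) + B U ⁅P (dF g), P (B V)⁆ := by
      intro U V
      rw [show (⁅P (B U), P (dF g)⁆ : VF IM M) = -⁅P (dF g), P (B U)⁆ from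
          aux_bracket_skew _ _, aux_dagger hP (hB.1 U) g, aux_B1_neg hB,
        aux_BP hP hB (aux_lieDer_oneForm (hB.1 U) (P (dF g))) V]
      simp only [lieDer]
      ring
    have c1 : (P (B X)) (B (P (dF g)) Y) = - (P (B X)) (B Y (P (dF g))) := by
      rw [aux_Bskew hB (P (dF g)) Y, Derivation.map_neg]
    have c2 : (P (B Y)) (B (P (dF g)) X) = - (P (B Y)) (B X (P (dF g))) := by
      rw [aux_Bskew hB (P (dF g)) X, Derivation.map_neg]
    have c3 : (P (dF g)) (B (P (B X)) Y) = (P (dF g)) (B X (P (B Y))) :=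
      congrArg _ (aux_hs hP hB X Y)
    have s2 := aux_hs hP hB ⁅X, P (dF g)⁆ Y
    have s3 := aux_hs hP hB ⁅Y, P (dF g)⁆ X
    have b1 := aux_Bskew hB (P (dF g)) ⁅P (B X), Y⁆
    have b2 := aux_Bskew hB (P (dF g)) ⁅X, P (B Y)⁆
    have bc := aux_Bskew hB (P (dF g)) (P (B ⁅X, Y⁆))
    have c4 : B X ⁅P (dF g), P (B Y)⁆ = B ⁅P (B Y), P (dF g)⁆ X := by
      rw [aux_Bskew hB X ⁅P (dF g), P (B Y)⁆,
        show (⁅P (dF g), P (B Y)⁆ : VF IM M) = -⁅P (B Y), P (dF g)⁆ from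
          aux_bracket_skew _ _, aux_B1_neg hB]
      ring
    simp only [torsion, Derivation.sub_apply, Derivation.commutator_apply]
    rw [hrhs, cg Y, cg X, cg (⁅P (B X), Y⁆ + ⁅X, P (B Y)⁆ - P (B ⁅X, Y⁆)),
      aux_B2_sub hB, aux_B2_add hB]
    simp only [d2, lcomp]
    rw [c1, c2, c3, s2, s3, b1, b2, bc, bl X Y, bl Y X, c4, bl Y X]
    ring
  · -- part 3
    funext X Y Z
    have e1 := congrFun (part1 (B X) (B Y) (hB.1 X) (hB.1 Y)) Z
    have e2 := congrFun (part1 (B Y) (B Z) (hB.1 Y) (hB.1 Z)) X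
    have e3 := congrFun (part1 (B Z) (B X) (hB.1 Z) (hB.1 X)) Y
    simp only [concom, Pi.add_apply, Pi.sub_apply, transp, lieDer, dF, bivFun, d2]
      at e1 e2 e3
    rw [htr (B X) (hB.1 X)] at e1
    rw [htr (B Y) (hB.1 Y)] at e2
    rw [htr (B Z) (hB.1 Z)] at e3
    simp only [dA2, iota3, iota2, cyc, lcomp, d2, Pi.sub_apply, Derivation.map_add]
    simp only [← aux_hs hP hB] at e1 e2 e3 ⊢
    have brs : ∀ U V : VF IM M, (⁅U, V⁆ : VF IM M) = -⁅V, U⁆ := aux_bracket_skew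
    have q1 : ∀ U V W : VF IM M, B (P (B U)) ⁅P (B V), W⁆
        = - B (P (B ⁅P (B V), W⁆)) U := by
      intro U V W
      rw [aux_Bskew hB (P (B U)) ⁅P (B V), W⁆]; simp only [← aux_hs hP hB]
    have q2 : ∀ U V W : VF IM M, B U ⁅P (B V), P (B W)⁆
        = - B ⁅P (B V), P (B W)⁆ U := fun U V W => aux_Bskew hB U _
    have q3 : ∀ U V W : VF IM M, B ⁅P (B V), P (B U)⁆ W
        = - B ⁅P (B U), P (B V)⁆ W := by
      intro U V W
      rw [brs (P (B V)) (P (B U)), aux_B1_neg hB]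
    have q4 : ∀ U V W : VF IM M, B (P (B ⁅U, P (B V)⁆)) W
        = - B (P (B ⁅P (B V), U⁆)) W := by
      intro U V W
      rw [brs U (P (B V)), aux_cneg hP hB, aux_B1_neg hB]
    have q5 : ∀ U V : VF IM M, B (P (B V)) U = - B (P (B U)) V := by
      intro U V
      rw [aux_Bskew hB (P (B V)) U]; simp only [← aux_hs hP hB]
    have q6 : ∀ U V : VF IM M, B (P (B (P (B V)))) U = - B (P (B (P (B U)))) V := by
      intro U V
      rw [aux_Bskew hB (P (B (P (B V)))) U]; simp only [← aux_hs hP hB]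
    simp only [q1 X Y Z, q1 Y X Z, q1 Y Z X, q1 Z Y X, q1 Z X Y, q1 X Z Y,
      q2 Y X Z, q2 X Y Z, q2 Z Y X, q2 Y Z X, q2 X Z Y, q2 Z X Y,
      q3 X Y Z, q3 X Z Y, q3 Y Z X,
      q4 X Y Z, q4 X Z Y, q4 Y Z X,
      q5 X Y, q5 X Z, q5 Y Z, q6 X Y, q6 X Z, q6 Y Z,
      Derivation.map_neg] at e1 e2 e3 ⊢
    linear_combination -e1

end
end

section
/- Let Q be a bivector field, H a 3-form, and A a (1,1)-tensor on a smooth manifold M such that Q♯∘Aᵗ = A∘Q♯ and C_{Q,A}(α,β) = −ι_{Q♯α∧Q♯β}H for all 1-forms α,β. Let B be a 2-form and C = Q♯∘B♭. Then for all vector fields X,Y: [AX,CY] − A[CX,Y] − A[X,CY] + AC[X,Y] + [CX,AY] − C[AX,Y] − C[X,AY] + CA[X,Y] = Q♯(ι_{AX∧Y}dB + ι_{X∧AY}dB − ι_{X∧Y}d(ι_A B) + ι_{CX∧Y}H + ι_{X∧CY}H); and moreover d_A B_C + d_C(ι_A B) = ℋ^{C,C} + ℬ^{A,C} + ℬ^{C,A}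 − dB_{AC} − d(ι_{CA}B), where ℋ^{S,T}(X,Y,Z) = Σ_{cyclic(X,Y,Z)} H(SX,TY,Z), ℬ^{S,T}(X,Y,Z) = Σ_{cyclic(X,Y,Z)} dB(SX,TY,Z), and B_{AC}(X,Y) = B(ACX,Y). -/
open scoped Manifold

noncomputable section

/-! ### Smooth functions, vector fields and tensor calculus on a manifold

We work with the algebraic (Lie–Rinehart) presentation of the Cartan calculus of a
smooth manifold `M`:  smooth real functions form a commutative ring, vector fields are
the derivations of that ring, differential forms are alternating multilinear maps on
vector fields with values in functions, and all classical operations (`d`, interior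
products, Lie derivatives, Nijenhuis torsion, concomitants, ...) are given by their
global Koszul-type formulas. -/

variable {EM : Type*} [NormedAddCommGroup EM] [NormedSpace ℝ EM]
  {HM : Type*} [TopologicalSpace HM] (IM : ModelWithCorners ℝ EM HM)
  (M : Type*) [TopologicalSpace M] [ChartedSpace HM M]

variable {IM M}

/-! ### Auxiliary lemmas -/

theorem IsOneForm.zero' {α : Cov1 IM M} (h : IsOneForm α) : α 0 = 0 := by
  have := h.2 0 0
  simpa using this

theorem IsOneForm.neg' {α : Cov1 IM M} (h : IsOneForm α) (X : VF IM M) : α (-X) = -α X := by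
  have h0 := h.zero'
  have := h.1 X (-X)
  rw [add_neg_cancel, h0] at this
  linear_combination -this

theorem IsOneForm.sub' {α : Cov1 IM M} (h : IsOneForm α) (X Y : VF IM M) :
    α (X - Y) = α X - α Y := by
  rw [sub_eq_add_neg, h.1, h.neg', sub_eq_add_neg]

theorem oneform_dF (f : SmoothR IM M) : IsOneForm ((dF f : Cov1 IM M)) := ⟨fun _ _ => rfl, fun _ _ => rfl⟩

theorem twoform_swap {B : Cov2 IM M} (hB : IsTwoForm B) (X Y : VF IM M) :
    B X Y = - B Y X := by
  have h := hB.2.2 (X + Y)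
  have h1 : B (X + Y) (X + Y) = B X (X+Y) + B Y (X+Y) := (hB.2.1 (X+Y)).1 X Y
  rw [(hB.1 X).1, (hB.1 Y).1, hB.2.2 X, hB.2.2 Y] at h1
  rw [h1] at h
  linear_combination h

theorem twoform_neg1 {B : Cov2 IM M} (hB : IsTwoForm B) (U V : VF IM M) :
    B (-U) V = -B U V := (hB.2.1 V).neg' U

theorem twoform_neg2 {B : Cov2 IM M} (hB : IsTwoForm B) (U V : VF IM M) :
    B U (-V) = -B U V := (hB.1 U).neg' V

theorem IsTensor11.neg' {A : VF IM M → VF IM M} (hA : IsTensor11 A) (X : VF IM M) :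
    A (-X) = -A X := by
  have h1 : ((-1 : SmoothR IM M) • X) = -X := by module
  rw [← h1, hA.2]
  module

theorem threeform_swap12 {H : Cov3 IM M} (hH : IsThreeForm H) (X Y Z : VF IM M) :
    H X Y Z = - H Y X Z := by
  have h := hH.2.2.2.1 (X + Y) Z
  have h1 : H (X+Y) (X+Y) Z = H X (X+Y) Z + H Y (X+Y) Z := (hH.2.2.1 (X+Y) Z).1 X Y
  have h2 : H X (X+Y) Z = H X X Z + H X Y Z := (hH.2.1 X Z).1 X Y
  have h3 : H Y (X+Y) Z = H Y X Z + H Y Y Z := (hH.2.1 Y Z).1 X Y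
  rw [h1, h2, h3, hH.2.2.2.1 X Z, hH.2.2.2.1 Y Z] at h
  linear_combination h

theorem threeform_swap23 {H : Cov3 IM M} (hH : IsThreeForm H) (X Y Z : VF IM M) :
    H X Y Z = - H X Z Y := by
  have h := hH.2.2.2.2.1 X (Y + Z)
  have h1 : H X (Y+Z) (Y+Z) = H X (Y+Z) Y + H X (Y+Z) Z := (hH.1 X (Y+Z)).1 Y Z
  have h2 : H X (Y+Z) Y = H X Y Y + H X Z Y := (hH.2.1 X Y).1 Y Z
  have h3 : H X (Y+Z) Z = H X Y Z + H X Z Z := (hH.2.1 X Z).1 Y Z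
  rw [h1, h2, h3, hH.2.2.2.2.1 X Y, hH.2.2.2.2.1 X Z] at h
  linear_combination h

theorem bracket_smul (U Z : VF IM M) (f : SmoothR IM M) :
    ⁅U, f • Z⁆ = f • ⁅U, Z⁆ + (U f) • Z := by
  apply Derivation.ext; intro g
  rw [Derivation.commutator_apply]
  show U (f * Z g) - f * Z (U g) = (f • ⁅U, Z⁆) g + ((U f) • Z) g
  show U (f * Z g) - f * Z (U g) = f * ⁅U, Z⁆ g + (U f) * Z g
  rw [Derivation.commutator_apply, U.leibniz]
  simp only [smul_eq_mul]
  ring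

section PairLemmas

variable {Q : Cov1 IM M → VF IM M} {B : Cov2 IM M} {A : VF IM M → VF IM M}

theorem CF (hQ : IsBivector Q) (hB : IsTwoForm B) (U : VF IM M) (f : SmoothR IM M) :
    Q (B U) f = - B U (Q ((dF f : Cov1 IM M))) := by
  have := hQ.2.2 ((dF f : Cov1 IM M)) (B U) (oneform_dF f) (hB.1 U)
  exact this

theorem QAT (hQ : IsBivector Q) (hB : IsTwoForm B) (hA : IsTensor11 A)
    (U : VF IM M) (f : SmoothR IM M) :
    Q (transp A (B U)) f = - B U (A (Q ((dF f : Cov1 IM M)))) := by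
  have hof : IsOneForm (transp A (B U)) := by
    refine ⟨fun X Y => ?_, fun g X => ?_⟩
    · show B U (A (X + Y)) = B U (A X) + B U (A Y)
      rw [hA.1, (hB.1 U).1]
    · show B U (A (g • X)) = g * B U (A X)
      rw [hA.2, (hB.1 U).2]
  have := hQ.2.2 ((dF f : Cov1 IM M)) (transp A (B U)) (oneform_dF f) hof
  exact this

theorem ACF (hQ : IsBivector Q) (hB : IsTwoForm B) (hA : IsTensor11 A)
    (hQA : ∀ α : Cov1 IM M, IsOneForm α → A (Q α) = Q (transp A α))
    (U : VF IM M) (f : SmoothR IM M) :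
    A (Q (B U)) f = - B U (A (Q ((dF f : Cov1 IM M)))) := by
  rw [hQA (B U) (hB.1 U)]
  exact QAT hQ hB hA U f

end PairLemmas


theorem bracket_add_right (U Z W : VF IM M) : ⁅U, Z + W⁆ = ⁅U, Z⁆ + ⁅U, W⁆ := by
  apply Derivation.ext; intro g
  rw [Derivation.add_apply, Derivation.commutator_apply, Derivation.commutator_apply,
    Derivation.commutator_apply, Derivation.add_apply, Derivation.add_apply, map_add]
  ring

theorem bracket_skew (U Z : VF IM M) : ⁅U, Z⁆ = -⁅Z, U⁆ := by
  apply Derivation.ext; intro g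
  rw [Derivation.neg_apply, Derivation.commutator_apply, Derivation.commutator_apply]
  ring

theorem twoform_add1 {B : Cov2 IM M} (hB : IsTwoForm B) (V P R : VF IM M) :
    B (P + R) V = B P V + B R V := (hB.2.1 V).1 P R

theorem twoform_smul1 {B : Cov2 IM M} (hB : IsTwoForm B) (V : VF IM M)
    (s : SmoothR IM M) (P : VF IM M) : B (s • P) V = s * B P V := (hB.2.1 V).2 s P

theorem twoform_add2 {B : Cov2 IM M} (hB : IsTwoForm B) (U P R : VF IM M) :
    B U (P + R) = B U P + B U R := (hB.1 U).1 P R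

theorem twoform_smul2 {B : Cov2 IM M} (hB : IsTwoForm B) (U : VF IM M)
    (s : SmoothR IM M) (P : VF IM M) : B U (s • P) = s * B U P := (hB.1 U).2 s P

theorem oneform_transpB {B : Cov2 IM M} {A : VF IM M → VF IM M}
    (hB : IsTwoForm B) (hA : IsTensor11 A) (U : VF IM M) :
    IsOneForm (transp A (B U)) := by
  refine ⟨fun X Y => ?_, fun g X => ?_⟩
  · show B U (A (X + Y)) = B U (A X) + B U (A Y)
    rw [hA.1, (hB.1 U).1]
  · show B U (A (g • X)) = g * B U (A X)
    rw [hA.2, (hB.1 U).2]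

theorem transp_apply {A : VF IM M → VF IM M} (α : Cov1 IM M) (X : VF IM M) :
    transp A α X = α (A X) := rfl

theorem Cpair {Q : Cov1 IM M → VF IM M} {B : Cov2 IM M}
    (hQ : IsBivector Q) (hB : IsTwoForm B) (U V : VF IM M) :
    B U (Q (B V)) = B (Q (B U)) V := by
  have h := hQ.2.2 (B U) (B V) (hB.1 U) (hB.1 V)
  rw [h]
  linear_combination -(twoform_swap hB V (Q (B U)))

theorem cpairSwap {Q : Cov1 IM M → VF IM M} {B : Cov2 IM M}
    (hQ : IsBivector Q) (hB : IsTwoForm B) (U V : VF IM M) :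
    B (Q (B U)) V = -B (Q (B V)) U := by
  rw [twoform_swap hB (Q (B U)) V, Cpair hQ hB V U]

theorem ACpair {Q : Cov1 IM M → VF IM M} {B : Cov2 IM M} {A : VF IM M → VF IM M}
    (hQ : IsBivector Q) (hB : IsTwoForm B) (hA : IsTensor11 A)
    (hQA : ∀ α : Cov1 IM M, IsOneForm α → A (Q α) = Q (transp A α)) (U V : VF IM M) :
    B U (A (Q (B V))) = -B V (A (Q (B U))) := by
  rw [hQA (B V) (hB.1 V)]
  exact hQ.2.2 (B U) (transp A (B V)) (hB.1 U) (oneform_transpB hB hA V)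

theorem QTA {Q : Cov1 IM M → VF IM M} {B : Cov2 IM M} {A : VF IM M → VF IM M}
    (hQ : IsBivector Q) (hB : IsTwoForm B) (hA : IsTensor11 A)
    (hQA : ∀ α : Cov1 IM M, IsOneForm α → A (Q α) = Q (transp A α)) (U : VF IM M) :
    Q (transp A (B U)) = A (Q (B U)) := (hQA (B U) (hB.1 U)).symm

theorem QBneg {Q : Cov1 IM M → VF IM M} {B : Cov2 IM M}
    (hQ : IsBivector Q) (hB : IsTwoForm B) (U : VF IM M) :
    Q (B (-U)) = -Q (B U) := by
  have h1 : B (-U) = (-1 : SmoothR IM M) • B U := by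
    funext W
    show B (-U) W = (-1 : SmoothR IM M) • B U W
    rw [twoform_neg1 hB]
    simp
  rw [h1, hQ.2.1]
  module

theorem dF_apply (f : SmoothR IM M) (X : VF IM M) : (dF f : Cov1 IM M) X = X f := rfl

theorem d2_oneform {B : Cov2 IM M} (hB : IsTwoForm B) (U V : VF IM M) :
    IsOneForm (d2 B U V) := by
  refine ⟨fun Z W => ?_, fun s Z => ?_⟩
  · simp only [d2, twoform_add2 hB, bracket_add_right, twoform_add1 hB,
      Derivation.add_apply, map_add]
    ring
  · simp only [d2, twoform_smul2 hB, bracket_smul, twoform_add1 hB, twoform_smul1 hB,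
      Derivation.smul_apply, smul_eq_mul, Derivation.leibniz]
    linear_combination (U s) * twoform_swap hB Z V - (V s) * twoform_swap hB Z U
  
theorem iota2_twoform {B : Cov2 IM M} {A : VF IM M → VF IM M}
    (hA : IsTensor11 A) (hB : IsTwoForm B) : IsTwoForm (iota2 A B) := by
  refine ⟨fun X => ⟨fun U V => ?_, fun s U => ?_⟩,
    fun Y => ⟨fun U V => ?_, fun s U => ?_⟩, fun X => ?_⟩
  · simp only [iota2, hA.1, (hB.1 _).1, (hB.1 _).1]; ring
  · simp only [iota2, hA.2, (hB.1 _).2]; ring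
  · simp only [iota2, hA.1, (hB.2.1 _).1, (hB.1 _).1]
    ring
  · simp only [iota2, hA.2, (hB.2.1 _).2]
    ring
  · simp only [iota2]
    linear_combination twoform_swap hB (A X) X

set_option maxHeartbeats 4000000 in
/-- **Lemma 3.3.**  Let `Q` be a bivector field, `H` a 3-form and `A` a `(1,1)`-tensor
with `Q♯ ∘ Aᵗ = A ∘ Q♯` and `C_{Q,A}(α,β) = -ι_{Q♯α ∧ Q♯β}H`.  For a 2-form `B` and
`C = Q♯ ∘ B♭` one has the two displayed identities (3.8) and (3.9) of the paper. -/
theorem concomitant_mixed_identities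
    (Q : Cov1 IM M → VF IM M) (hQ : IsBivector Q)
    (H : Cov3 IM M) (hH : IsThreeForm H)
    (A : VF IM M → VF IM M) (hA : IsTensor11 A)
    (hQA : ∀ α : Cov1 IM M, IsOneForm α → A (Q α) = Q (transp A α))
    (hconc : ∀ α β : Cov1 IM M, IsOneForm α → IsOneForm β →
      concom Q A α β = fun Z => - H (Q α) (Q β) Z)
    (B : Cov2 IM M) (hB : IsTwoForm B) :
    (∀ X Y, ⁅A X, Q (B Y)⁆ - A ⁅Q (B X), Y⁆ - A ⁅X, Q (B Y)⁆ + A (Q (B ⁅X, Y⁆))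
        + ⁅Q (B X), A Y⁆ - Q (B ⁅A X, Y⁆) - Q (B ⁅X, A Y⁆) + Q (B (A ⁅X, Y⁆)) =
      Q (fun Z => d2 B (A X) Y Z + d2 B X (A Y) Z - d2 (iota2 A B) X Y Z
        + H (Q (B X)) Y Z + H X (Q (B Y)) Z)) ∧
    dA2 A (lcomp B fun X => Q (B X)) + dA2 (fun X => Q (B X)) (iota2 A B) =
      cyc H (fun X => Q (B X)) (fun X => Q (B X))
        + cyc (d2 B) A (fun X => Q (B X)) + cyc (d2 B) (fun X => Q (B X)) A
        - d2 (lcomp B fun X => A (Q (B X)))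
        - d2 (iota2 (fun X => Q (B (A X))) B) := by
  have Bsw := twoform_swap hB
  constructor
  · intro X Y
    apply Derivation.ext; intro f
    have o1 : IsOneForm (d2 B (A X) Y) := d2_oneform hB _ _
    have o2 : IsOneForm (d2 B X (A Y)) := d2_oneform hB _ _
    have o3 : IsOneForm (d2 (iota2 A B) X Y) := d2_oneform (iota2_twoform hA hB) X Y
    have o4 : IsOneForm (H (Q (B X)) Y) := hH.1 _ _
    have o5 : IsOneForm (H X (Q (B Y))) := hH.1 _ _
    have hxi : IsOneForm (fun Z => d2 B (A X) Y Z + d2 B X (A Y) Z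
        - d2 (iota2 A B) X Y Z + H (Q (B X)) Y Z + H X (Q (B Y)) Z) := by
      refine ⟨fun Z W => ?_, fun s Z => ?_⟩
      · dsimp only
        rw [o1.1, o2.1, o3.1, o4.1, o5.1]; ring
      · dsimp only
        rw [o1.2, o2.2, o3.2, o4.2, o5.2]; ring
    have hR := hQ.2.2 (dF f) _ (oneform_dF f) hxi
    rw [dF_apply] at hR
    rw [hR]
    have h1 := congrFun (hconc (B X) (dF f) (hB.1 X) (oneform_dF f)) Y
    have h2 := congrFun (hconc (B Y) (dF f) (hB.1 Y) (oneform_dF f)) X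
    simp only [concom, lieDer, transp, bivFun, dF_apply, Pi.add_apply, Pi.sub_apply,
      Derivation.commutator_apply, CF hQ hB, ACF hQ hB hA hQA, QAT hQ hB hA,
      map_add, map_sub, map_neg] at h1 h2
    simp only [d2, iota2, Derivation.add_apply, Derivation.sub_apply,
      Derivation.neg_apply, Derivation.commutator_apply, CF hQ hB,
      ACF hQ hB hA hQA, QAT hQ hB hA, map_add, map_sub, map_neg]
    have e2 : (A ⁅X, Q (B Y)⁆) f = -((A ⁅Q (B Y), X⁆) f) := by
      rw [bracket_skew X, hA.neg', Derivation.neg_apply]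
    have s1 : B X ⁅Q (dF f), A Y⁆ = B ⁅A Y, Q (dF f)⁆ X := by
      rw [bracket_skew (Q (dF f)), twoform_neg2 hB]
      linear_combination -(twoform_swap hB X ⁅A Y, Q (dF f)⁆)
    have s2 : B Y ⁅Q (dF f), A X⁆ = B ⁅A X, Q (dF f)⁆ Y := by
      rw [bracket_skew (Q (dF f)), twoform_neg2 hB]
      linear_combination -(twoform_swap hB Y ⁅A X, Q (dF f)⁆)
    have s3 : B X (A ⁅Q (dF f), Y⁆) = B (A ⁅Y, Q (dF f)⁆) X := by
      rw [bracket_skew (Q (dF f)), hA.neg', twoform_neg2 hB]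
      linear_combination -(twoform_swap hB X (A ⁅Y, Q (dF f)⁆))
    have s4 : B Y (A ⁅Q (dF f), X⁆) = B (A ⁅X, Q (dF f)⁆) Y := by
      rw [bracket_skew (Q (dF f)), hA.neg', twoform_neg2 hB]
      linear_combination -(twoform_swap hB Y (A ⁅X, Q (dF f)⁆))
    have sH1 : H (Q (B X)) Y (Q (dF f)) = -H (Q (B X)) (Q (dF f)) Y :=
      threeform_swap23 hH _ _ _
    have sH2 : H X (Q (B Y)) (Q (dF f)) = H (Q (B Y)) (Q (dF f)) X := by
      rw [threeform_swap12 hH, threeform_swap23 hH]; ring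
    linear_combination -h1 + h2 + sH1 + sH2 + s1 - s2 - s3 + s4 - e2
  · funext X Y Z
    have h1 := congrFun (hconc (B X) (B Y) (hB.1 X) (hB.1 Y)) Z
    have h2 := congrFun (hconc (B Y) (B Z) (hB.1 Y) (hB.1 Z)) X
    have h3 := congrFun (hconc (B Z) (B X) (hB.1 Z) (hB.1 X)) Y
    have e0 : B (Q (B (⁅Y, Z⁆))) (A (X)) = -B (Q (B (A (X)))) (⁅Y, Z⁆) := cpairSwap hQ hB _ _
    have e1 : B (Q (B (X))) (A (Y)) = -B (Q (B (A (Y)))) (X) := cpairSwap hQ hB _ _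
    have e2 : ⁅X, A (Y)⁆ = -⁅A (Y), X⁆ := bracket_skew _ _
    have e3 : B (Q (B (⁅X, Z⁆))) (A (Y)) = -B (Q (B (A (Y)))) (⁅X, Z⁆) := cpairSwap hQ hB _ _
    have e4 : B (Q (B (Y))) (A (Z)) = -B (Q (B (A (Z)))) (Y) := cpairSwap hQ hB _ _
    have e5 : B (Q (B (X))) (A (Z)) = -B (Q (B (A (Z)))) (X) := cpairSwap hQ hB _ _
    have e6 : B (Q (B (⁅X, Y⁆))) (A (Z)) = -B (Q (B (A (Z)))) (⁅X, Y⁆) := cpairSwap hQ hB _ _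
    have e7 : ⁅X, A (Z)⁆ = -⁅A (Z), X⁆ := bracket_skew _ _
    have e8 : ⁅Y, A (Z)⁆ = -⁅A (Z), Y⁆ := bracket_skew _ _
    have e9 : B (Y) (A (Z)) = -B (A (Z)) (Y) := twoform_swap hB _ _
    have e10 : B (A (Q (B (X)))) (Z) = -B (Z) (A (Q (B (X)))) := twoform_swap hB _ _
    have e11 : B (Z) (A (Q (B (X)))) = -B (X) (A (Q (B (Z)))) := ACpair hQ hB hA hQA _ _
    have e12 : B (A (Q (B (X)))) (Y) = -B (Y) (A (Q (B (X)))) := twoform_swap hB _ _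
    have e13 : B (Y) (A (Q (B (X)))) = -B (X) (A (Q (B (Y)))) := ACpair hQ hB hA hQA _ _
    have e14 : B (⁅Q (B (X)), Y⁆) (A (Z)) = -B (A (Z)) (⁅Q (B (X)), Y⁆) := twoform_swap hB _ _
    have e15 : B (⁅Q (B (X)), Z⁆) (A (Y)) = -B (A (Y)) (⁅Q (B (X)), Z⁆) := twoform_swap hB _ _
    have e16 : B (A (⁅Y, Z⁆)) (Q (B (X))) = B (Q (B (A (⁅Y, Z⁆)))) (X) := Cpair hQ hB _ _
    have e17 : B (A (Q (B (Y)))) (Z) = -B (Z) (A (Q (B (Y)))) := twoform_swap hB _ _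
    have e18 : B (Z) (A (Q (B (Y)))) = -B (Y) (A (Q (B (Z)))) := ACpair hQ hB hA hQA _ _
    have e19 : B (X) (A (Z)) = -B (A (Z)) (X) := twoform_swap hB _ _
    have e20 : B (A (X)) (Q (B (Y))) = B (Q (B (A (X)))) (Y) := Cpair hQ hB _ _
    have e21 : ⁅X, Q (B (Y))⁆ = -⁅Q (B (Y)), X⁆ := bracket_skew _ _
    have e22 : B (⁅Q (B (Y)), X⁆) (A (Z)) = -B (A (Z)) (⁅Q (B (Y)), X⁆) := twoform_swap hB _ _
    have e23 : B (A (⁅X, Z⁆)) (Q (B (Y))) = B (Q (B (A (⁅X, Z⁆)))) (Y) := Cpair hQ hB _ _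
    have e24 : B (⁅Q (B (Y)), Z⁆) (A (X)) = -B (A (X)) (⁅Q (B (Y)), Z⁆) := twoform_swap hB _ _
    have e25 : B (A (Y)) (Q (B (Z))) = B (Q (B (A (Y)))) (Z) := Cpair hQ hB _ _
    have e26 : B (A (X)) (Q (B (Z))) = B (Q (B (A (X)))) (Z) := Cpair hQ hB _ _
    have e27 : B (X) (A (Y)) = -B (A (Y)) (X) := twoform_swap hB _ _
    have e28 : B (A (⁅X, Y⁆)) (Q (B (Z))) = B (Q (B (A (⁅X, Y⁆)))) (Z) := Cpair hQ hB _ _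
    have e29 : ⁅X, Q (B (Z))⁆ = -⁅Q (B (Z)), X⁆ := bracket_skew _ _
    have e30 : B (⁅Q (B (Z)), X⁆) (A (Y)) = -B (A (Y)) (⁅Q (B (Z)), X⁆) := twoform_swap hB _ _
    have e31 : ⁅Y, Q (B (Z))⁆ = -⁅Q (B (Z)), Y⁆ := bracket_skew _ _
    have e32 : B (⁅Q (B (Z)), Y⁆) (A (X)) = -B (A (X)) (⁅Q (B (Z)), Y⁆) := twoform_swap hB _ _
    have e33 : B (A (Q (B (⁅X, Y⁆)))) (Z) = -B (Z) (A (Q (B (⁅X, Y⁆)))) := twoform_swap hB _ _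
    have e34 : B (Z) (A (Q (B (⁅X, Y⁆)))) = -B (⁅X, Y⁆) (A (Q (B (Z)))) := ACpair hQ hB hA hQA _ _
    have e35 : B (A (Q (B (⁅X, Z⁆)))) (Y) = -B (Y) (A (Q (B (⁅X, Z⁆)))) := twoform_swap hB _ _
    have e36 : B (Y) (A (Q (B (⁅X, Z⁆)))) = -B (⁅X, Z⁆) (A (Q (B (Y)))) := ACpair hQ hB hA hQA _ _
    have e37 : B (A (Q (B (⁅Y, Z⁆)))) (X) = -B (X) (A (Q (B (⁅Y, Z⁆)))) := twoform_swap hB _ _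
    have e38 : B (X) (A (Q (B (⁅Y, Z⁆)))) = -B (⁅Y, Z⁆) (A (Q (B (X)))) := ACpair hQ hB hA hQA _ _
    have e39 : H (Q (B (Z))) (Q (B (X))) (Y) = -H (Q (B (X))) (Q (B (Z))) (Y) := threeform_swap12 hH _ _ _
    have e40 : B (⁅A (X), Z⁆) (Q (B (Y))) = B (Q (B (⁅A (X), Z⁆))) (Y) := Cpair hQ hB _ _
    have e41 : B (Q (B (Z))) (X) = -B (Q (B (X))) (Z) := cpairSwap hQ hB _ _
    have e42 : B (⁅A (Y), X⁆) (Q (B (Z))) = B (Q (B (⁅A (Y), X⁆))) (Z) := Cpair hQ hB _ _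
    have e43 : B (A (Z)) (Q (B (X))) = B (Q (B (A (Z)))) (X) := Cpair hQ hB _ _
    have e44 : B (⁅A (Z), Y⁆) (Q (B (X))) = B (Q (B (⁅A (Z), Y⁆))) (X) := Cpair hQ hB _ _
    have e45 : ⁅Q (B (X)), A (Y)⁆ = -⁅A (Y), Q (B (X))⁆ := bracket_skew _ _
    have e46 : B (⁅A (Y), Z⁆) (Q (B (X))) = B (Q (B (⁅A (Y), Z⁆))) (X) := Cpair hQ hB _ _
    have e47 : B (Q (B (Y))) (X) = -B (Q (B (X))) (Y) := cpairSwap hQ hB _ _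
    have e48 : ⁅Q (B (Y)), A (Z)⁆ = -⁅A (Z), Q (B (Y))⁆ := bracket_skew _ _
    have e49 : B (⁅A (Z), X⁆) (Q (B (Y))) = B (Q (B (⁅A (Z), X⁆))) (Y) := Cpair hQ hB _ _
    have e50 : B (Q (B (Z))) (Y) = -B (Q (B (Y))) (Z) := cpairSwap hQ hB _ _
    have e51 : B (Q (B (Z))) (A (X)) = -B (Q (B (A (X)))) (Z) := cpairSwap hQ hB _ _
    have e52 : ⁅Q (B (Z)), A (X)⁆ = -⁅A (X), Q (B (Z))⁆ := bracket_skew _ _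
    have e53 : B (⁅A (X), Y⁆) (Q (B (Z))) = B (Q (B (⁅A (X), Y⁆))) (Z) := Cpair hQ hB _ _
    have e54 : B (Y) (Q (B (A (Z)))) = B (Q (B (Y))) (A (Z)) := Cpair hQ hB _ _
    have e55 : B (X) (Q (B (A (Z)))) = B (Q (B (X))) (A (Z)) := Cpair hQ hB _ _
    have e56 : B (X) (Q (B (A (Y)))) = B (Q (B (X))) (A (Y)) := Cpair hQ hB _ _
    have e57 : B (⁅X, Y⁆) (Q (B (A (Z)))) = B (Q (B (⁅X, Y⁆))) (A (Z)) := Cpair hQ hB _ _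
    have e58 : B (⁅X, Z⁆) (Q (B (A (Y)))) = B (Q (B (⁅X, Z⁆))) (A (Y)) := Cpair hQ hB _ _
    have e59 : B (⁅Y, Z⁆) (Q (B (A (X)))) = B (Q (B (⁅Y, Z⁆))) (A (X)) := Cpair hQ hB _ _
    have e60 : B (X) (A (⁅Q (B (Y)), Z⁆)) = -B (A (⁅Q (B (Y)), Z⁆)) (X) := twoform_swap hB _ _
    have e61 : B (Y) (A (⁅Q (B (X)), Z⁆)) = -B (A (⁅Q (B (X)), Z⁆)) (Y) := twoform_swap hB _ _
    have e62 : ⁅Q (B (X)), A (Z)⁆ = -⁅A (Z), Q (B (X))⁆ := bracket_skew _ _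
    have e63 : B (Y) (⁅A (Z), Q (B (X))⁆) = -B (⁅A (Z), Q (B (X))⁆) (Y) := twoform_swap hB _ _
    have e64 : B (X) (⁅A (Z), Q (B (Y))⁆) = -B (⁅A (Z), Q (B (Y))⁆) (X) := twoform_swap hB _ _
    have e65 : B (Y) (Q (B (X))) = B (Q (B (Y))) (X) := Cpair hQ hB _ _
    have e66 : B (Y) (A (X)) = -B (A (X)) (Y) := twoform_swap hB _ _
    have e67 : B (Y) (A (⁅Q (B (Z)), X⁆)) = -B (A (⁅Q (B (Z)), X⁆)) (Y) := twoform_swap hB _ _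
    have e68 : B (Z) (A (X)) = -B (A (X)) (Z) := twoform_swap hB _ _
    have e69 : B (Z) (A (⁅Q (B (Y)), X⁆)) = -B (A (⁅Q (B (Y)), X⁆)) (Z) := twoform_swap hB _ _
    have e70 : ⁅Q (B (Y)), A (X)⁆ = -⁅A (X), Q (B (Y))⁆ := bracket_skew _ _
    have e71 : B (Z) (⁅A (X), Q (B (Y))⁆) = -B (⁅A (X), Q (B (Y))⁆) (Z) := twoform_swap hB _ _
    have e72 : B (Y) (⁅A (X), Q (B (Z))⁆) = -B (⁅A (X), Q (B (Z))⁆) (Y) := twoform_swap hB _ _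
    have e73 : B (Z) (Q (B (Y))) = B (Q (B (Z))) (Y) := Cpair hQ hB _ _
    have e74 : B (Z) (A (Y)) = -B (A (Y)) (Z) := twoform_swap hB _ _
    have e75 : B (Z) (A (⁅Q (B (X)), Y⁆)) = -B (A (⁅Q (B (X)), Y⁆)) (Z) := twoform_swap hB _ _
    have e76 : B (X) (A (⁅Q (B (Z)), Y⁆)) = -B (A (⁅Q (B (Z)), Y⁆)) (X) := twoform_swap hB _ _
    have e77 : ⁅Q (B (Z)), A (Y)⁆ = -⁅A (Y), Q (B (Z))⁆ := bracket_skew _ _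
    have e78 : B (X) (⁅A (Y), Q (B (Z))⁆) = -B (⁅A (Y), Q (B (Z))⁆) (X) := twoform_swap hB _ _
    have e79 : B (Z) (⁅A (Y), Q (B (X))⁆) = -B (⁅A (Y), Q (B (X))⁆) (Z) := twoform_swap hB _ _
    have e80 : B (X) (Q (B (Z))) = B (Q (B (X))) (Z) := Cpair hQ hB _ _
    simp only [concom, lieDer, transp_apply, bivFun, dF_apply, Pi.add_apply,
      Pi.sub_apply, QTA hQ hB hA hQA, map_add, map_sub, map_neg] at h1 h2 h3
    simp only [dA2, iota3, iota2, d2, lcomp, cyc, Pi.add_apply, Pi.sub_apply]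
    simp only [e0, e1, e2, e3, e4, e5, e6, e7, e8, e9, e10, e11, e12, e13, e14, e15, e16, e17, e18, e19, e20, e21, e22, e23, e24, e25, e26, e27, e28, e29, e30, e31, e32, e33, e34, e35, e36, e37, e38, e39, e40, e41, e42, e43, e44, e45, e46, e47, e48, e49, e50, e51, e52, e53, e54, e55, e56, e57, e58, e59, e60, e61, e62, e63, e64, e65, e66, e67, e68, e69, e70, e71, e72, e73, e74, e75, e76, e77, e78, e79, e80,
      twoform_neg1 hB, twoform_neg2 hB, hA.neg', QBneg hQ hB, Derivation.neg_apply,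
      map_add, map_sub, map_neg, neg_neg] at h1 h2 h3 ⊢
    linear_combination -h1 - h2 - h3


end
end

section
/- Let P be a Poisson bivector on a smooth manifold M, f ∈ C^∞(M) a Casimir function of P, and B a 2-form on M; set C = P♯∘B♭. Then both (e^f P, C, e^{−f}(−dB_C + df∧B_C), e^{−f}(dB − df∧B)) and (e^f P, e^f C, e^f(−dB_C − df∧B_C), dB) are Poisson quasi-Nijenhuis structures with background on M. -/
open scoped Manifold

noncomputable section

/-! ### Smooth functions, vector fields and tensor calculus on a manifold

We work with the algebraic (Lie–Rinehart) presentation of the Cartan calculus of a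
smooth manifold `M`:  smooth real functions form a commutative ring, vector fields are
the derivations of that ring, differential forms are alternating multilinear maps on
vector fields with values in functions, and all classical operations (`d`, interior
products, Lie derivatives, Nijenhuis torsion, concomitants, ...) are given by their
global Koszul-type formulas. -/

variable {EM : Type*} [NormedAddCommGroup EM] [NormedSpace ℝ EM]
  {HM : Type*} [TopologicalSpace HM] (IM : ModelWithCorners ℝ EM HM)
  (M : Type*) [TopologicalSpace M] [ChartedSpace HM M]

variable {IM M}

/-- The exponential of a smooth function. -/
def expF (f : SmoothR IM M) : SmoothR IM M :=
  ⟨fun x => Real.exp (f x), (Real.contDiff_exp.contMDiff).comp f.contMDiff⟩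

/-- The wedge product of a 1-form with a 2-form. -/
def wedge12 (α : Cov1 IM M) (B : Cov2 IM M) : Cov3 IM M := fun X Y Z =>
  α X * B Y Z - α Y * B X Z + α Z * B X Y

/-! For a Poisson bivector `P` and any 2-form `ω`, put `C = P♯ ∘ ω♭`. Then
`(P, C, -d(ω_C), dω)` is a PqNb structure: `P♯` intertwines the Koszul bracket of 1-forms with
the Lie bracket of vector fields, so the concomitant and torsion conditions reduce to the vanishing
of `[P, P]` on three 1-forms, and the last condition follows from `d² = 0` and the identity
`ι_C (-d(ω_C)) + ℋ = -dσ`, where `σ(X, Y) = ω(CX, CY)`.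

A Casimir `f` is annihilated by every Hamiltonian vector field, hence so is `e^f`, and `e^f P` is
again Poisson. Since `e^f P♯ ∘ (e^{-f} B)♭ = P♯ ∘ B♭`, the first structure is the one above for
`(e^f P, e^{-f} B)` and the second the one for `(e^f P, B)`; the forms `φ` and `H` are recovered
by expanding `d(e^u ω) = e^u (dω + du ∧ ω)`. -/

theorem AnalyticOnNhd.contDiff_dslope {g : ℝ → ℝ} (hg : AnalyticOnNhd ℝ g Set.univ) (c : ℝ)
    {n : WithTop ℕ∞} : ContDiff ℝ n (dslope g c) := by
  refine contDiff_iff_contDiffAt.2 fun x => ?_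
  rcases eq_or_ne x c with rfl | hx
  · obtain ⟨p, hp⟩ := hg x (Set.mem_univ x)
    exact hp.has_fpower_series_dslope_fslope.analyticAt.contDiffAt
  · have hslope : ContDiffAt ℝ n (fun y => (g y - g c) / (y - c)) x :=
      ((hg.contDiff.contDiffAt.sub contDiffAt_const).div
        (contDiffAt_id.sub contDiffAt_const) (sub_ne_zero.2 hx))
    refine hslope.congr_of_eventuallyEq ?_
    filter_upwards [eventually_ne_nhds hx] with y hy
    rw [dslope_of_ne _ hy, slope_def_field]

theorem Derivation.apply_of_comp {g : ℝ → ℝ} (hg : AnalyticOnNhd ℝ g Set.univ)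
    (D : VF IM M) {u v : SmoothR IM M} (hv : ∀ x, v x = g (u x)) (p : M) :
    D v p = deriv g (u p) * D u p := by
  set c := u p
  let G : SmoothR IM M := ⟨fun x => dslope g c (u x),
    (hg.contDiff_dslope c).contMDiff.comp u.contMDiff⟩
  let u₀ : SmoothR IM M := u - algebraMap ℝ _ c
  -- Hadamard's lemma for `g` at `c`, composed with `u`
  have hvG : v = algebraMap ℝ _ (g c) + u₀ * G := by
    ext x
    have := sub_smul_dslope g c (u x)
    simp only [smul_eq_mul] at this
    change v x = g c + (u x - c) * dslope g c (u x)
    rw [hv]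
    linarith
  have hDu₀ : D u₀ = D u := by simp [u₀]
  rw [hvG, map_add, Derivation.map_algebraMap, zero_add, Derivation.leibniz, hDu₀]
  change u₀ p * D G p + G p * D u p = _
  rw [show u₀ p = 0 from sub_self c, show G p = deriv g c from dslope_same g c, zero_mul,
    zero_add]

theorem Derivation.apply_expF (D : VF IM M) (u : SmoothR IM M) : D (expF u) = expF u * D u := by
  ext p
  rw [D.apply_of_comp analyticOnNhd_rexp (fun _ => rfl), Real.deriv_exp]
  rfl

theorem expF_mul_expF_neg (u : SmoothR IM M) : expF u * expF (-u) = 1 := by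
  ext x
  change Real.exp (u x) * Real.exp (-u x) = 1
  rw [← Real.exp_add, add_neg_cancel, Real.exp_zero]

theorem lie_smul_vf (X Y : VF IM M) (g : SmoothR IM M) :
    ⁅X, g • Y⁆ = g • ⁅X, Y⁆ + X g • Y := by
  ext u : 1
  simp only [Derivation.commutator_apply, Derivation.add_apply, Derivation.smul_apply,
    smul_eq_mul, Derivation.leibniz]
  ring

theorem SmoothR.eq_zero_of_eq_neg {a : SmoothR IM M} (h : a = -a) : a = 0 := by
  ext p
  have hp : a p = -a p := congrArg (fun b : SmoothR IM M => b p) h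
  change a p = 0
  linarith

namespace IsOneForm

variable {α β : Cov1 IM M}

theorem map_neg (h : IsOneForm α) (X : VF IM M) : α (-X) = -α X :=
  (AddMonoidHom.mk' α h.1).map_neg X

theorem map_sub (h : IsOneForm α) (X Y : VF IM M) : α (X - Y) = α X - α Y :=
  (AddMonoidHom.mk' α h.1).map_sub X Y

theorem add (hα : IsOneForm α) (hβ : IsOneForm β) : IsOneForm (α + β) :=
  ⟨fun X Y => by simp only [Pi.add_apply, hα.1, hβ.1]; ring,
    fun g X => by simp only [Pi.add_apply, hα.2, hβ.2]; ring⟩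

theorem neg (hα : IsOneForm α) : IsOneForm (-α) :=
  ⟨fun X Y => by simp only [Pi.neg_apply, hα.1]; ring,
    fun g X => by simp only [Pi.neg_apply, hα.2]; ring⟩

theorem sub (hα : IsOneForm α) (hβ : IsOneForm β) : IsOneForm (α - β) :=
  sub_eq_add_neg α β ▸ hα.add hβ.neg

theorem lieDer (X : VF IM M) (hα : IsOneForm α) : IsOneForm (lieDer X α) := by
  refine ⟨fun Y Z => ?_, fun g Y => ?_⟩ <;> simp only [_root_.lieDer]
  · rw [lie_add (L := VF IM M), hα.1, hα.1, map_add]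
    ring
  · rw [lie_smul_vf, hα.1, hα.2, hα.2, hα.2, Derivation.leibniz, smul_eq_mul]
    ring

end IsOneForm

theorem isOneForm_dF (u : SmoothR IM M) : IsOneForm (dF (IM := IM) u) :=
  ⟨fun _ _ => Derivation.add_apply _, fun _ _ => rfl⟩

namespace IsTwoForm

variable {ω : Cov2 IM M}

theorem add_right (h : IsTwoForm ω) (X Y Z : VF IM M) : ω X (Y + Z) = ω X Y + ω X Z :=
  (h.1 X).1 Y Z

theorem smul_right (h : IsTwoForm ω) (g : SmoothR IM M) (X Z : VF IM M) :
    ω X (g • Z) = g * ω X Z :=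
  (h.1 X).2 g Z

theorem add_left (h : IsTwoForm ω) (X Y Z : VF IM M) : ω (X + Y) Z = ω X Z + ω Y Z :=
  (h.2.1 Z).1 X Y

theorem smul_left (h : IsTwoForm ω) (g : SmoothR IM M) (X Z : VF IM M) :
    ω (g • X) Z = g * ω X Z :=
  (h.2.1 Z).2 g X

theorem neg_left (h : IsTwoForm ω) (X Z : VF IM M) : ω (-X) Z = -ω X Z :=
  (h.2.1 Z).map_neg X

theorem sub_left (h : IsTwoForm ω) (X Y Z : VF IM M) : ω (X - Y) Z = ω X Z - ω Y Z :=
  (h.2.1 Z).map_sub X Y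

theorem antisymm (h : IsTwoForm ω) (X Y : VF IM M) : ω X Y = -ω Y X := by
  have h0 := h.2.2 (X + Y)
  rw [h.add_left, (h.1 X).1, (h.1 Y).1, h.2.2, h.2.2] at h0
  linear_combination h0

theorem flat_add (h : IsTwoForm ω) (X Y : VF IM M) : ω (X + Y) = ω X + ω Y :=
  funext (h.add_left X Y)

theorem flat_smul (h : IsTwoForm ω) (g : SmoothR IM M) (X : VF IM M) : ω (g • X) = g • ω X :=
  funext (h.smul_left g X)

theorem flat_sub (h : IsTwoForm ω) (X Y : VF IM M) : ω (X - Y) = ω X - ω Y :=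
  funext (h.sub_left X Y)

theorem smul (h : IsTwoForm ω) (g : SmoothR IM M) : IsTwoForm (g • ω) := by
  refine ⟨fun X => ⟨fun Y Y' => ?_, fun k Y => ?_⟩, fun Y => ⟨fun X X' => ?_, fun k X => ?_⟩,
    fun X => ?_⟩ <;> simp only [Pi.smul_apply, smul_eq_mul]
  · rw [(h.1 X).1, mul_add]
  · rw [(h.1 X).2, mul_left_comm]
  · rw [h.add_left, mul_add]
  · rw [h.smul_left, mul_left_comm]
  · rw [h.2.2, mul_zero]

end IsTwoForm

theorem IsThreeForm.neg {φ : Cov3 IM M} (h : IsThreeForm φ) : IsThreeForm (-φ) := by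
  obtain ⟨h1, h2, h3, h4, h5, h6⟩ := h
  exact ⟨fun X Y => (h1 X Y).neg, fun X Z => (h2 X Z).neg, fun Y Z => (h3 Y Z).neg,
    fun X Y => by simp [h4], fun X Y => by simp [h5], fun X Y => by simp [h6]⟩

theorem IsThreeForm.of_antisymm {φ : Cov3 IM M} (hlin : ∀ X Y, IsOneForm (φ X Y))
    (h12 : ∀ X Y Z, φ Y X Z = -φ X Y Z) (h23 : ∀ X Y Z, φ X Z Y = -φ X Y Z) :
    IsThreeForm φ := by
  have h13 : ∀ X Y Z, φ X Y Z = φ Y Z X := fun X Y Z => by rw [h12 Y X Z, h23 Y X Z]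
  refine ⟨hlin, fun X Z => ?_, fun Y Z => ?_, fun X Y => ?_, fun X Y => ?_, fun X Y => ?_⟩
  · rw [show (fun Y => φ X Y Z) = -φ X Z from funext fun Y => h23 X Z Y]
    exact (hlin X Z).neg
  · rw [show (fun X => φ X Y Z) = φ Y Z from funext fun X => h13 X Y Z]
    exact hlin Y Z
  · exact SmoothR.eq_zero_of_eq_neg (h12 X X Y)
  · exact SmoothR.eq_zero_of_eq_neg (h23 X Y Y)
  · rw [h13, SmoothR.eq_zero_of_eq_neg (h23 Y X X)]

section ExteriorDerivative

variable {ω : Cov2 IM M}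

theorem d2_swap_left (h : IsTwoForm ω) (X Y Z : VF IM M) : d2 ω Y X Z = -d2 ω X Y Z := by
  simp only [d2]
  rw [h.antisymm Y X, map_neg, ← lie_skew (L := VF IM M) Y X, h.neg_left]
  ring

theorem d2_swap_right (h : IsTwoForm ω) (X Y Z : VF IM M) : d2 ω X Z Y = -d2 ω X Y Z := by
  simp only [d2]
  rw [h.antisymm Z Y, map_neg, ← lie_skew (L := VF IM M) Z Y, h.neg_left]
  ring

theorem isOneForm_d2 (h : IsTwoForm ω) (X Y : VF IM M) : IsOneForm (d2 ω X Y) := by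
  refine ⟨fun Z Z' => ?_, fun g Z => ?_⟩ <;> simp only [d2]
  · simp only [h.add_right, h.add_left, map_add, Derivation.add_apply, lie_add (L := VF IM M)]
    ring
  · simp only [h.smul_right, h.add_left, h.smul_left, Derivation.leibniz, Derivation.smul_apply,
      lie_smul_vf, smul_eq_mul]
    rw [h.antisymm Z Y, h.antisymm Z X]
    ring

theorem isThreeForm_d2 (h : IsTwoForm ω) : IsThreeForm (d2 ω) :=
  .of_antisymm (isOneForm_d2 h) (d2_swap_left h) (d2_swap_right h)

theorem lie_lie_vf (X Y Z : VF IM M) : ⁅⁅X, Y⁆, Z⁆ = ⁅⁅X, Z⁆, Y⁆ - ⁅⁅Y, Z⁆, X⁆ := by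
  ext u : 1
  simp only [Derivation.commutator_apply, Derivation.sub_apply, map_sub]
  ring

theorem d3_d2 (h : IsTwoForm ω) : d3 (d2 ω) = 0 := by
  funext X Y Z W
  change _ = (0 : SmoothR IM M)
  simp only [d3, d2, map_add, map_sub, Derivation.commutator_apply]
  have jW := congrArg (ω · W) (lie_lie_vf X Y Z)
  have jZ := congrArg (ω · Z) (lie_lie_vf X Y W)
  have jY := congrArg (ω · Y) (lie_lie_vf X Z W)
  have jX := congrArg (ω · X) (lie_lie_vf Y Z W)
  simp only [h.sub_left] at jW jZ jY jX
  linear_combination jW - jZ + jY - jX + h.antisymm ⁅Z, W⁆ ⁅X, Y⁆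
    - h.antisymm ⁅Y, W⁆ ⁅X, Z⁆ + h.antisymm ⁅Y, Z⁆ ⁅X, W⁆

theorem d3_neg (φ : Cov3 IM M) : d3 (-φ) = -d3 φ := by
  funext X Y Z W
  simp only [d3, Pi.neg_apply, map_neg]
  ring

theorem d3_sub (φ ψ : Cov3 IM M) : d3 (φ - ψ) = d3 φ - d3 ψ := by
  funext X Y Z W
  simp only [d3, Pi.sub_apply, map_sub]
  ring

end ExteriorDerivative

namespace IsBivector

variable {P : Cov1 IM M → VF IM M}

theorem map_sub (hb : IsBivector P) (α β : Cov1 IM M) : P (α - β) = P α - P β :=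
  (AddMonoidHom.mk' P hb.1).map_sub α β

theorem apply_eq (hb : IsBivector P) {α : Cov1 IM M} (hα : IsOneForm α) (u : SmoothR IM M) :
    P α u = -α (P (dF u)) :=
  hb.2.2 (dF u) α (isOneForm_dF u) hα

theorem hamiltonian_antisymm (hb : IsBivector P) (u v : SmoothR IM M) :
    P (dF u) v = -P (dF v) u :=
  hb.apply_eq (isOneForm_dF u) v

theorem apply_self {α : Cov1 IM M} (hb : IsBivector P) (hα : IsOneForm α) : α (P α) = 0 :=
  SmoothR.eq_zero_of_eq_neg (hb.2.2 α α hα hα)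

end IsBivector

def koszul (P : Cov1 IM M → VF IM M) (α β : Cov1 IM M) : Cov1 IM M :=
  lieDer (P α) β - lieDer (P β) α - dF (β (P α))

theorem IsOneForm.koszul {P : Cov1 IM M → VF IM M} {α β : Cov1 IM M} (hα : IsOneForm α)
    (hβ : IsOneForm β) : IsOneForm (koszul P α β) :=
  ((hβ.lieDer _).sub (hα.lieDer _)).sub (isOneForm_dF _)

theorem koszul_apply (P : Cov1 IM M → VF IM M) (α β : Cov1 IM M) (Z : VF IM M) :
    koszul P α β Z =
      P α (β Z) - β ⁅P α, Z⁆ - P β (α Z) + α ⁅P β, Z⁆ - Z (β (P α)) := by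
  simp only [koszul, Pi.sub_apply, lieDer, dF]
  ring

namespace IsPoisson

variable {P : Cov1 IM M → VF IM M}

theorem lie_hamiltonian (hP : IsPoisson P) (u v : SmoothR IM M) :
    ⁅P (dF u), P (dF v)⁆ = P (dF (P (dF u) v)) := by
  ext w : 1
  have jacobi := hP.2 u v w
  simp only [pbracket] at jacobi
  rw [hP.1.hamiltonian_antisymm w u, map_neg,
    hP.1.hamiltonian_antisymm w (P (dF u) v)] at jacobi
  rw [Derivation.commutator_apply]
  linear_combination jacobi

theorem lie_sharp_hamiltonian (hP : IsPoisson P) {α : Cov1 IM M} (hα : IsOneForm α)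
    (h : SmoothR IM M) :
    ⁅P α, P (dF h)⁆ = -P (lieDer (P (dF h)) α) := by
  ext u : 1
  rw [Derivation.commutator_apply, Derivation.neg_apply, hP.1.apply_eq hα u, map_neg,
    hP.1.apply_eq hα, hP.1.apply_eq (hα.lieDer _) u, ← hP.lie_hamiltonian h u]
  simp only [lieDer]
  ring

theorem lie_sharp (hP : IsPoisson P) {α β : Cov1 IM M} (hα : IsOneForm α) (hβ : IsOneForm β) :
    ⁅P α, P β⁆ = P (koszul P α β) := by
  ext h : 1
  rw [Derivation.commutator_apply, hP.1.apply_eq hβ h, hP.1.apply_eq hα h, map_neg, map_neg,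
    hP.1.apply_eq (hα.koszul hβ) h, koszul_apply, hP.lie_sharp_hamiltonian hβ h, hα.map_neg,
    hP.1.2.2 α _ hα (hβ.lieDer _)]
  simp only [lieDer]
  rw [← lie_skew (L := VF IM M) (P α) (P (dF h)), hβ.map_neg]
  ring

/-- The vanishing of `[P, P]` evaluated on three 1-forms. -/
theorem jacobi_oneForms (hP : IsPoisson P) {α β γ : Cov1 IM M} (hα : IsOneForm α) (hβ : IsOneForm β)
    (hγ : IsOneForm γ) :
    γ ⁅P α, P β⁆ - β ⁅P α, P γ⁆ + α ⁅P β, P γ⁆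
      = P α (γ (P β)) - P β (γ (P α)) - P γ (α (P β)) := by
  rw [hP.lie_sharp hα hβ, hP.1.2.2 γ _ hγ (hα.koszul hβ), koszul_apply, hP.1.2.2 β γ hβ hγ,
    hP.1.2.2 α γ hα hγ, hP.1.2.2 β α hβ hα]
  simp only [map_neg]
  ring

end IsPoisson

section Gauge

variable {P : Cov1 IM M → VF IM M} {ω : Cov2 IM M}

theorem apply_sharp_flat (hP : IsPoisson P) (hω : IsTwoForm ω) {α : Cov1 IM M}
    (hα : IsOneForm α) (U : VF IM M) : α (P (ω U)) = ω (P α) U := by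
  rw [hP.1.2.2 α (ω U) hα (hω.1 U), hω.antisymm U, neg_neg]

theorem transp_sharp_flat (hP : IsPoisson P) (hω : IsTwoForm ω) {α : Cov1 IM M}
    (hα : IsOneForm α) : transp (fun X => P (ω X)) α = ω (P α) :=
  funext (apply_sharp_flat hP hω hα)

theorem flat_sharp_flat_symm (hP : IsPoisson P) (hω : IsTwoForm ω) (U V : VF IM M) :
    ω (P (ω U)) V = ω U (P (ω V)) := by
  rw [hω.antisymm, apply_sharp_flat hP hω (hω.1 V), hω.antisymm (P (ω V)), neg_neg]

theorem isTensor11_sharp_flat (hP : IsPoisson P) (hω : IsTwoForm ω) :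
    IsTensor11 fun X => P (ω X) :=
  ⟨fun X Y => by dsimp only; rw [hω.flat_add, hP.1.1],
    fun g X => by dsimp only; rw [hω.flat_smul, hP.1.2.1]⟩

theorem isTwoForm_lcomp_sharp_flat (hP : IsPoisson P) (hω : IsTwoForm ω) :
    IsTwoForm (lcomp ω fun X => P (ω X)) := by
  refine ⟨fun X => hω.1 _, fun Y => ⟨fun X X' => ?_, fun g X => ?_⟩, fun X => ?_⟩ <;>
    simp only [lcomp]
  · rw [hω.flat_add, hP.1.1, hω.add_left]
  · rw [hω.flat_smul, hP.1.2.1, hω.smul_left]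
  · rw [hω.antisymm, hP.1.apply_self (hω.1 X), neg_zero]

theorem isTwoForm_flat_sharp_flat_pullback (hP : IsPoisson P) (hω : IsTwoForm ω) :
    IsTwoForm fun X Y => ω (P (ω X)) (P (ω Y)) := by
  refine ⟨fun X => ⟨fun Y Y' => ?_, fun g Y => ?_⟩, fun Y => ⟨fun X X' => ?_, fun g X => ?_⟩,
    fun X => hω.2.2 _⟩ <;> dsimp only
  · rw [hω.flat_add, hP.1.1, hω.add_right]
  · rw [hω.flat_smul, hP.1.2.1, hω.smul_right]
  · rw [hω.flat_add, hP.1.1, hω.add_left]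
  · rw [hω.flat_smul, hP.1.2.1, hω.smul_left]

theorem concom_sharp_flat (hP : IsPoisson P) (hω : IsTwoForm ω) {α β : Cov1 IM M}
    (hα : IsOneForm α) (hβ : IsOneForm β) :
    concom P (fun X => P (ω X)) α β = fun Z => -d2 ω (P α) (P β) Z := by
  funext Z
  simp only [concom, Pi.add_apply, Pi.sub_apply, transp_sharp_flat hP hω hα,
    transp_sharp_flat hP hω hβ, lieDer, dF, bivFun, transp, d2, apply_sharp_flat hP hω hα,
    apply_sharp_flat hP hω hβ]
  rw [hP.1.2.2 β α hβ hα, hω.antisymm (P α) (P β)]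
  have jacobi := hP.jacobi_oneForms hα hβ (hω.1 Z)
  simp only [hω.antisymm Z (P β), hω.antisymm Z (P α), map_neg] at jacobi
  simp only [map_neg]
  linear_combination jacobi + hω.antisymm (P β) ⁅P α, Z⁆ - hω.antisymm (P α) ⁅P β, Z⁆
    - hω.antisymm ⁅P α, P β⁆ Z

theorem torsion_sharp_flat (hP : IsPoisson P) (hω : IsTwoForm ω) (X Y : VF IM M) :
    torsion (fun X => P (ω X)) X Y
      = P (fun Z => (-d2 (lcomp ω fun X => P (ω X))) X Y Z
          + d2 ω (P (ω X)) Y Z + d2 ω X (P (ω Y)) Z) := by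
  have hform : (fun Z => (-d2 (lcomp ω fun X => P (ω X))) X Y Z
          + d2 ω (P (ω X)) Y Z + d2 ω X (P (ω Y)) Z)
      = koszul P (ω X) (ω Y)
        - (ω ⁅P (ω X), Y⁆ + ω ⁅X, P (ω Y)⁆ - ω (P (ω ⁅X, Y⁆))) := by
    funext Z
    simp only [Pi.neg_apply, Pi.sub_apply, Pi.add_apply, d2, lcomp, koszul_apply]
    rw [hω.antisymm X (P (ω Y)), flat_sharp_flat_symm hP hω Y X]
    simp only [map_neg]
    linear_combination -flat_sharp_flat_symm hP hω ⁅X, Z⁆ Y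
      + flat_sharp_flat_symm hP hω ⁅Y, Z⁆ X + hω.antisymm Y ⁅P (ω X), Z⁆
      - hω.antisymm X ⁅P (ω Y), Z⁆
  rw [hform, hP.1.map_sub, hP.1.map_sub, hP.1.1, torsion, hP.lie_sharp (hω.1 X) (hω.1 Y),
    hω.flat_sub, hω.flat_add, hP.1.map_sub, hP.1.1]

theorem flat_lie_sharp_flat (hP : IsPoisson P) (hω : IsTwoForm ω) (X Y Z : VF IM M) :
    ω ⁅P (ω X), P (ω Y)⁆ Z = koszul P (ω X) (ω Y) (P (ω Z)) := by
  rw [hP.lie_sharp (hω.1 X) (hω.1 Y), hω.antisymm,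
    hP.1.2.2 (ω Z) _ (hω.1 Z) ((hω.1 X).koszul (hω.1 Y)), neg_neg]

theorem flat_apply_sharp_flat_antisymm (hP : IsPoisson P) (hω : IsTwoForm ω) (X Y : VF IM M) :
    ω Y (P (ω X)) = -ω X (P (ω Y)) := by
  rw [hω.antisymm Y, flat_sharp_flat_symm hP hω X Y]

theorem iota3_add_cyc_sharp_flat (hP : IsPoisson P) (hω : IsTwoForm ω) :
    iota3 (fun X => P (ω X)) (-d2 (lcomp ω fun X => P (ω X)))
        + cyc (d2 ω) (fun X => P (ω X)) (fun X => P (ω X))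
      = -d2 fun X Y => ω (P (ω X)) (P (ω Y)) := by
  funext X Y Z
  simp only [iota3, cyc, Pi.add_apply, Pi.neg_apply, d2, lcomp]
  rw [flat_lie_sharp_flat hP hω X Y Z, flat_lie_sharp_flat hP hω Y Z X,
    flat_lie_sharp_flat hP hω Z X Y]
  simp only [koszul_apply, flat_sharp_flat_symm hP hω]
  have hCC : ω Z (P (ω (P (ω X)))) = -ω X (P (ω (P (ω Z)))) := by
    rw [flat_apply_sharp_flat_antisymm hP hω, flat_sharp_flat_symm hP hω]
  simp only [flat_apply_sharp_flat_antisymm hP hω X Y, flat_apply_sharp_flat_antisymm hP hω X Z,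
    flat_apply_sharp_flat_antisymm hP hω Y Z, hCC,
    ← lie_skew (L := VF IM M) (P (ω Y)) X, ← lie_skew (L := VF IM M) (P (ω Z)) Y,
    ← lie_skew (L := VF IM M) (P (ω Z)) X, ← lie_skew (L := VF IM M) (P (ω Z)) (P (ω X)),
    ← lie_skew (L := VF IM M) (P (ω Y)) (P (ω X)), ← lie_skew (L := VF IM M) (P (ω Z)) (P (ω Y)),
    hω.neg_left, (hω.1 _).map_neg, map_neg]
  have jacobi := hP.jacobi_oneForms (hω.1 X) (hω.1 Y) (hω.1 Z)
  simp only [flat_apply_sharp_flat_antisymm hP hω X Z, flat_apply_sharp_flat_antisymm hP hω Y Z,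
    map_neg] at jacobi
  linear_combination -2 * jacobi

theorem isPqNb_sharp_flat (hP : IsPoisson P) (hω : IsTwoForm ω) :
    IsPqNb P (fun X => P (ω X)) (-d2 (lcomp ω fun X => P (ω X))) (d2 ω) := by
  have hφ : d3 (-d2 (lcomp ω fun X => P (ω X))) = 0 := by
    rw [d3_neg, d3_d2 (isTwoForm_lcomp_sharp_flat hP hω), neg_zero]
  refine ⟨hP, isTensor11_sharp_flat hP hω, (isThreeForm_d2 (isTwoForm_lcomp_sharp_flat hP hω)).neg,
    hφ, isThreeForm_d2 hω, d3_d2 hω, fun α hα => by rw [transp_sharp_flat hP hω hα],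
    fun α β hα hβ => concom_sharp_flat hP hω hα hβ, torsion_sharp_flat hP hω, ?_⟩
  rw [dA3, hφ, eq_sub_of_add_eq (iota3_add_cyc_sharp_flat hP hω), d3_sub, d3_neg,
    d3_d2 (isTwoForm_flat_sharp_flat_pullback hP hω)]
  funext X Y Z W
  simp [iota4]

end Gauge

section Conformal

variable {P : Cov1 IM M → VF IM M} {f : SmoothR IM M}

theorem IsPoisson.hamiltonian_expF_casimir (hP : IsPoisson P) (hf : P (dF f) = 0)
    (u : SmoothR IM M) : P (dF u) (expF f) = 0 := by
  rw [Derivation.apply_expF, hP.1.hamiltonian_antisymm u f, hf, Derivation.zero_apply, neg_zero,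
    mul_zero]

theorem IsPoisson.expF_smul (hP : IsPoisson P) (hf : P (dF f) = 0) :
    IsPoisson fun α => expF f • P α := by
  refine ⟨⟨fun α β => ?_, fun g α => ?_, fun α β hα hβ => ?_⟩, fun u v w => ?_⟩
  · simp only [hP.1.1, smul_add]
  · dsimp only
    rw [hP.1.2.1, smul_comm]
  · dsimp only
    rw [hα.2, hβ.2, hP.1.2.2 α β hα hβ, mul_neg]
  · have jacobi := hP.2 u v w
    simp only [pbracket, Derivation.smul_apply, smul_eq_mul, Derivation.leibniz,
      hP.hamiltonian_expF_casimir hf] at jacobi ⊢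
    linear_combination (expF f * expF f) * jacobi

end Conformal

theorem lcomp_smul_left (g : SmoothR IM M) (ω : Cov2 IM M) (C : VF IM M → VF IM M) :
    lcomp (g • ω) C = g • lcomp ω C :=
  rfl

theorem IsTwoForm.lcomp_smul_right {ω : Cov2 IM M} (hω : IsTwoForm ω) (g : SmoothR IM M)
    (C : VF IM M → VF IM M) : (lcomp ω fun X => g • C X) = g • lcomp ω C :=
  funext fun X => funext fun Y => hω.smul_left g (C X) Y

theorem wedge12_dF_neg (u : SmoothR IM M) (ω : Cov2 IM M) :
    wedge12 (dF (-u)) ω = -wedge12 (dF u) ω := by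
  funext X Y Z
  simp only [wedge12, dF, map_neg, Pi.neg_apply]
  ring

theorem d2_expF_smul (u : SmoothR IM M) (ω : Cov2 IM M) :
    d2 (expF u • ω) = expF u • (d2 ω + wedge12 (dF u) ω) := by
  funext X Y Z
  simp only [d2, wedge12, dF, Pi.smul_apply, smul_eq_mul, Pi.add_apply, Derivation.leibniz,
    Derivation.apply_expF]
  ring

theorem neg_d2_expF_smul (u : SmoothR IM M) (ω : Cov2 IM M) :
    -d2 (expF u • ω) = expF u • (-d2 ω - wedge12 (dF u) ω) := by
  rw [d2_expF_smul, ← smul_neg, neg_add']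

/-- **Proposition 3.9 (conformal change combined with gauge transformation).**
Let `P` be a Poisson bivector on `M`, `f` a Casimir function of `P` and `B` a 2-form;
set `C = P♯ ∘ B♭`.  Then both
`(e^f P, C, e^{-f}(-dB_C + df ∧ B_C), e^{-f}(dB - df ∧ B))` and
`(e^f P, e^f C, e^f(-dB_C - df ∧ B_C), dB)` are Poisson quasi-Nijenhuis structures with
background on `M`. -/
theorem conformal_gauge_PqNb
    (P : Cov1 IM M → VF IM M) (hP : IsPoisson P)
    (f : SmoothR IM M) (hf : P (dF f) = 0)
    (B : Cov2 IM M) (hB : IsTwoForm B) :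
    IsPqNb (fun α => expF f • P α) (fun X => P (B X))
        (expF (-f) • (-(d2 (lcomp B fun X => P (B X)))
          + wedge12 (dF f) (lcomp B fun X => P (B X))))
        (expF (-f) • (d2 B - wedge12 (dF f) B)) ∧
    IsPqNb (fun α => expF f • P α) (fun X => expF f • P (B X))
        (expF f • (-(d2 (lcomp B fun X => P (B X)))
          - wedge12 (dF f) (lcomp B fun X => P (B X))))
        (d2 B) := by
  have hPf := hP.expF_smul hf
  have hC : (fun X => expF f • P ((expF (-f) • B) X)) = fun X => P (B X) := funext fun X => by
    rw [Pi.smul_apply, hP.1.2.1, smul_smul, expF_mul_expF_neg, one_smul]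
  constructor
  · have h := isPqNb_sharp_flat hPf (hB.smul (expF (-f)))
    rwa [hC, lcomp_smul_left, neg_d2_expF_smul, d2_expF_smul, wedge12_dF_neg, wedge12_dF_neg,
      sub_neg_eq_add, ← sub_eq_add_neg] at h
  · have h := isPqNb_sharp_flat hPf hB
    rwa [hB.lcomp_smul_right, neg_d2_expF_smul] at h

end
end
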